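/- arXiv:1401.0841 — 10 statements merged into one kernel-verified Lean document; each statement's English description precedes it below -/
import Mathlib

section
/- In the Firework process on ℕ, constructed from i.i.d. radii (R_i)_{i≥0} with P(R_0 ≤ k) = α_k, the final number of spreaders M satisfies M = min{ i ≥ 0 : R_j ≤ i - j for all j = 0,...,i }, and the probability of survival P(M = ∞) equals (1 + ∑_{j≥1} ∏_{i=0}^{j-1} α_i)^{-1}, interpreted as 0 when the series diverges. -/
/-!
Call `i` a stopping point when `R j ≤ i - j` for all `j ≤ i`; then `M` is the first stopping
point. By independence, the event that the sites `a, …, c` inform nobody beyond `c` has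
probability `∏_{k ≤ c - a} α_k`. Splitting the event "`i` is a stopping point" according to the
value `m ≤ i` of `M`, and using that `{M = m}` depends only on `R_0, …, R_m`, gives the renewal
equation `u_{i+1} = ∑_{m ≤ i} P(M = m) u_{i-m}` for `u_n = ∏_{k < n} α_k`. Summing it yields
`U = 1 + P(M < ∞) U` with `U = ∑ u_n`, hence `P(M = ∞) = U⁻¹` when `U < ∞`; when `U = ∞`, the same
equation on partial sums still gives `U · P(M = ∞) ≤ 1`, which forces `P(M = ∞) = 0`.
-/

open MeasureTheory ProbabilityTheory Filter Finset
open scoped ENNReal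

noncomputable def fireworkM {Ω : Type*} (R : ℕ → Ω → ℕ) (ω : Ω) : ℕ∞ :=
  sInf {N : ℕ∞ | ∃ i : ℕ, N = (i : ℕ∞) ∧ ∀ j ≤ i, R j ω ≤ i - j}

theorem ENNReal.tsum_mul_tsum_eq_tsum_sum_range (f g : ℕ → ℝ≥0∞) :
    (∑' n, f n) * ∑' n, g n = ∑' n, ∑ k ∈ range (n + 1), f k * g (n - k) := by
  simp_rw [← Nat.sum_antidiagonal_eq_sum_range_succ fun k l => f k * g l,
    ← ENNReal.tsum_mul_right, ← ENNReal.tsum_mul_left, ← ENNReal.tsum_prod,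
    ← (HasAntidiagonal.sigmaAntidiagonalEquivProd (A := ℕ)).tsum_eq, ENNReal.tsum_sigma']
  exact tsum_congr fun n => Finset.tsum_subtype (antidiagonal n) fun p => f p.1 * g p.2

section Renewal

variable {u f : ℕ → ℝ≥0∞}

theorem tsum_eq_one_add_tsum_mul_tsum_of_renewal (hu0 : u 0 = 1)
    (hconv : ∀ i, u (i + 1) = ∑ m ∈ range (i + 1), f m * u (i - m)) :
    ∑' n, u n = 1 + (∑' m, f m) * ∑' n, u n := by
  rw [ENNReal.tsum_mul_tsum_eq_tsum_sum_range, tsum_eq_zero_add' ENNReal.summable, hu0]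
  simp only [hconv]

theorem sum_range_succ_le_one_add_tsum_mul_sum_of_renewal (hu0 : u 0 = 1)
    (hconv : ∀ i, u (i + 1) = ∑ m ∈ range (i + 1), f m * u (i - m)) (n : ℕ) :
    ∑ k ∈ range (n + 1), u k ≤ 1 + (∑' m, f m) * ∑ k ∈ range n, u k :=
  calc ∑ k ∈ range (n + 1), u k
      = 1 + ∑ i ∈ range n, ∑ m ∈ range (i + 1), f m * u (i - m) := by
        rw [sum_range_succ', hu0, add_comm]; simp only [hconv]
    _ = 1 + ∑ m ∈ range n, f m * ∑ d ∈ range (n - m), u d := by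
        rw [sum_range_diag_flip n fun m d => f m * u d]; simp only [mul_sum]
    _ ≤ 1 + ∑ m ∈ range n, f m * ∑ k ∈ range n, u k := by
        gcongr with m; exact Nat.sub_le n m
    _ ≤ 1 + (∑' m, f m) * ∑ k ∈ range n, u k := by
        rw [← sum_mul]; gcongr; exact ENNReal.sum_le_tsum _

theorem tsum_mul_one_sub_tsum_le_one_of_renewal (hu0 : u 0 = 1) (hu : ∀ n, u n ≠ ⊤)
    (hconv : ∀ i, u (i + 1) = ∑ m ∈ range (i + 1), f m * u (i - m)) :
    (∑' n, u n) * (1 - ∑' m, f m) ≤ 1 := by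
  set F := ∑' m, f m
  rcases lt_or_ge 1 F with hF | hF
  · simp [tsub_eq_zero_of_le hF.le]
  rw [ENNReal.tsum_eq_iSup_nat, ENNReal.iSup_mul]
  refine iSup_le fun n => ?_
  have hW : ∑ k ∈ range n, u k ≠ ⊤ := ENNReal.sum_ne_top.2 fun k _ => hu k
  refine ENNReal.le_of_add_le_add_right
    (ENNReal.mul_ne_top (ne_top_of_le_ne_top ENNReal.one_ne_top hF) hW) ?_
  calc (∑ k ∈ range n, u k) * (1 - F) + F * ∑ k ∈ range n, u k
      = ∑ k ∈ range n, u k := by rw [mul_comm F, ← mul_add, tsub_add_cancel_of_le hF, mul_one]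
    _ ≤ ∑ k ∈ range (n + 1), u k := sum_le_sum_of_subset (range_subset_range.2 n.le_succ)
    _ ≤ 1 + F * ∑ k ∈ range n, u k := sum_range_succ_le_one_add_tsum_mul_sum_of_renewal hu0 hconv n

theorem one_sub_tsum_eq_inv_tsum_of_renewal (hu0 : u 0 = 1) (hu : ∀ n, u n ≠ ⊤)
    (hconv : ∀ i, u (i + 1) = ∑ m ∈ range (i + 1), f m * u (i - m)) :
    1 - ∑' m, f m = (∑' n, u n)⁻¹ := by
  have hU := tsum_eq_one_add_tsum_mul_tsum_of_renewal hu0 hconv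
  have hle := tsum_mul_one_sub_tsum_le_one_of_renewal hu0 hu hconv
  set U := ∑' n, u n
  set F := ∑' m, f m
  by_cases hUtop : U = ⊤
  · rw [hUtop, ENNReal.inv_top]
    by_contra hF
    rw [hUtop, ENNReal.top_mul hF, top_le_iff] at hle
    exact ENNReal.one_ne_top hle
  · have hFU : F * U ≠ ⊤ := ne_top_of_le_ne_top hUtop (le_add_self.trans_eq hU.symm)
    refine ENNReal.eq_inv_of_mul_eq_one_left ?_
    rw [ENNReal.sub_mul fun _ _ => hUtop, one_mul]
    exact ENNReal.sub_eq_of_eq_add_rev hFU (hU.trans (add_comm _ _))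

end Renewal

theorem MeasureTheory.measure_eq_top_eq_one_sub_tsum {Ω : Type*} [MeasurableSpace Ω]
    (P : Measure Ω) [IsProbabilityMeasure P] {X : Ω → ℕ∞}
    (hX : ∀ m : ℕ, MeasurableSet {ω | X ω = m}) :
    P {ω | X ω = ⊤} = 1 - ∑' m : ℕ, P {ω | X ω = m} := by
  have hcompl : {ω | X ω = ⊤} = (⋃ m : ℕ, {ω | X ω = m})ᶜ := by
    ext ω; simp [ENat.eq_top_iff_forall_ne, eq_comm]
  have hdisj : Pairwise (Function.onFun Disjoint fun m : ℕ => {ω | X ω = m}) :=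
    fun m n hmn => Set.disjoint_left.2 fun ω hm hn => hmn (by simp_all)
  rw [hcompl, measure_compl (.iUnion hX) (measure_ne_top P _), measure_univ,
    measure_iUnion hdisj hX]

section Firework

variable {Ω : Type*} (R : ℕ → Ω → ℕ)

def fireworkWindow (a c : ℕ) : Set Ω := ⋂ j ∈ Icc a c, {ω | R j ω ≤ c - j}

abbrev radiiSigma (S : Set ℕ) : MeasurableSpace Ω :=
  ⨆ j ∈ S, MeasurableSpace.comap (R j) inferInstance

variable {R}

theorem mem_fireworkWindow {a c : ℕ} {ω : Ω} :
    ω ∈ fireworkWindow R a c ↔ ∀ j, a ≤ j → j ≤ c → R j ω ≤ c - j := by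
  simp [fireworkWindow]

theorem mem_fireworkWindow_zero {i : ℕ} {ω : Ω} :
    ω ∈ fireworkWindow R 0 i ↔ ∀ j ≤ i, R j ω ≤ i - j := by
  simp [mem_fireworkWindow]

theorem fireworkM_eq_top_iff {ω : Ω} : fireworkM R ω = ⊤ ↔ ∀ i, ω ∉ fireworkWindow R 0 i := by
  simp only [fireworkM, sInf_eq_top, mem_fireworkWindow_zero]
  constructor
  · exact fun h i hi => ENat.natCast_ne_top i (h _ ⟨i, rfl, hi⟩)
  · rintro h _ ⟨i, rfl, hi⟩
    exact (h i hi).elim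

theorem fireworkM_eq_coe_iff {ω : Ω} {m : ℕ} :
    fireworkM R ω = m ↔ ω ∈ fireworkWindow R 0 m ∧ ∀ l < m, ω ∉ fireworkWindow R 0 l := by
  simp only [mem_fireworkWindow_zero]
  constructor
  · intro h
    have hne : {N : ℕ∞ | ∃ i : ℕ, N = (i : ℕ∞) ∧ ∀ j ≤ i, R j ω ≤ i - j}.Nonempty := by
      by_contra he
      simp [fireworkM, Set.not_nonempty_iff_eq_empty.1 he] at h
    obtain ⟨i, hi, hpi⟩ := csInf_mem hne
    obtain rfl : i = m := by exact_mod_cast hi.symm.trans h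
    refine ⟨hpi, fun l hl hpl => ?_⟩
    have : fireworkM R ω ≤ l := csInf_le (OrderBot.bddBelow _) ⟨l, rfl, hpl⟩
    exact absurd (h ▸ this) (by exact_mod_cast hl.not_ge)
  · rintro ⟨hm, hl⟩
    refine IsLeast.csInf_eq ⟨⟨m, rfl, hm⟩, ?_⟩
    rintro _ ⟨l, rfl, hl'⟩
    exact Nat.cast_le.2 (not_lt.1 fun hlt => hl l hlt hl')

theorem fireworkWindow_zero_eq_biUnion (i : ℕ) :
    fireworkWindow R 0 i =
      ⋃ m ∈ range (i + 1), {ω | fireworkM R ω = m} ∩ fireworkWindow R (m + 1) i := by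
  ext ω
  simp only [Set.mem_iUnion, Set.mem_inter_iff, Set.mem_ofPred_eq, mem_range, exists_prop]
  constructor
  · intro hi
    obtain ⟨m, hm⟩ := ENat.ne_top_iff_exists.1 (mt fireworkM_eq_top_iff.1 fun h => h i hi)
    have hmi : m ≤ i := not_lt.1 fun hlt => (fireworkM_eq_coe_iff.1 hm.symm).2 i hlt hi
    refine ⟨m, Nat.lt_succ_of_le hmi, hm.symm, mem_fireworkWindow.2 fun j _ hj => ?_⟩
    exact mem_fireworkWindow.1 hi j (Nat.zero_le j) hj
  · rintro ⟨m, hmi, hm, hw⟩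
    have hm := mem_fireworkWindow_zero.1 (fireworkM_eq_coe_iff.1 hm).1
    refine mem_fireworkWindow_zero.2 fun j hj => ?_
    rcases le_or_gt j m with hjm | hjm
    · exact (hm j hjm).trans (by omega)
    · exact mem_fireworkWindow.1 hw j hjm hj

theorem measurableSet_fireworkWindow {S : Set ℕ} {a c : ℕ} (hS : ∀ j, a ≤ j → j ≤ c → j ∈ S) :
    MeasurableSet[radiiSigma R S] (fireworkWindow R a c) :=
  Finset.measurableSet_biInter _ fun j hj =>
    le_iSup₂ (f := fun j _ => MeasurableSpace.comap (R j) inferInstance) j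
      (hS j (mem_Icc.1 hj).1 (mem_Icc.1 hj).2) _ ⟨{n | n ≤ c - j}, .of_discrete, rfl⟩

theorem measurableSet_fireworkM_eq_coe (m : ℕ) :
    MeasurableSet[radiiSigma R (Set.Iic m)] {ω | fireworkM R ω = m} := by
  have hset : {ω | fireworkM R ω = m} =
      fireworkWindow R 0 m ∩ ⋂ l ∈ range m, (fireworkWindow R 0 l)ᶜ := by
    ext ω; simp [fireworkM_eq_coe_iff]
  rw [hset]
  exact (measurableSet_fireworkWindow fun j _ hj => hj).inter <|
    Finset.measurableSet_biInter _ fun l hl =>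
      (measurableSet_fireworkWindow fun j _ hj => hj.trans (mem_range.1 hl).le).compl

variable [MeasurableSpace Ω]

theorem radiiSigma_le (hmeas : ∀ j, Measurable (R j)) (S : Set ℕ) :
    radiiSigma R S ≤ ‹MeasurableSpace Ω› :=
  iSup₂_le fun j _ => (hmeas j).comap_le

variable {P : Measure Ω}

theorem measure_fireworkWindow {α : ℕ → ℝ≥0∞} (hindep : iIndepFun R P)
    (hα : ∀ j k, P {ω | R j ω ≤ k} = α k) (a c : ℕ) :
    P (fireworkWindow R a c) = ∏ k ∈ range (c + 1 - a), α k := by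
  rw [fireworkWindow, hindep.meas_biInter (s := fun j => {ω | R j ω ≤ c - j})
    fun j _ => ⟨{n | n ≤ c - j}, .of_discrete, rfl⟩]
  simp only [hα]
  refine prod_nbij' (fun j => c - j) (fun k => c - k) ?_ ?_ ?_ ?_ fun _ _ => rfl <;>
    · intro x hx
      simp only [mem_Icc, mem_range] at *
      omega

theorem measure_fireworkM_eq_inter_fireworkWindow (hmeas : ∀ j, Measurable (R j))
    (hindep : iIndepFun R P) (m i : ℕ) :
    P ({ω | fireworkM R ω = m} ∩ fireworkWindow R (m + 1) i) =
      P {ω | fireworkM R ω = m} * P (fireworkWindow R (m + 1) i) :=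
  (Indep_iff _ _ P).1
    (indep_iSup_of_disjoint (fun j => (hmeas j).comap_le) hindep.iIndep
      (S := Set.Iic m) (T := Set.Ioi m)
      (Set.disjoint_left.2 fun _ hj hj' => (Set.mem_Ioi.1 hj').not_ge hj))
    _ _ (measurableSet_fireworkM_eq_coe m) (measurableSet_fireworkWindow fun _ hj _ => hj)

theorem measure_fireworkWindow_zero_eq_sum (hmeas : ∀ j, Measurable (R j))
    (hindep : iIndepFun R P) (i : ℕ) :
    P (fireworkWindow R 0 i) =
      ∑ m ∈ range (i + 1), P {ω | fireworkM R ω = m} * P (fireworkWindow R (m + 1) i) := by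
  rw [fireworkWindow_zero_eq_biUnion, measure_biUnion_finset]
  · exact sum_congr rfl fun m _ => measure_fireworkM_eq_inter_fireworkWindow hmeas hindep m i
  · intro m _ n _ hmn
    refine Disjoint.mono Set.inter_subset_left Set.inter_subset_left ?_
    exact Set.disjoint_left.2 fun ω h1 h2 => hmn (by simp_all)
  · exact fun m _ => (radiiSigma_le hmeas _ _ (measurableSet_fireworkM_eq_coe m)).inter
      (radiiSigma_le hmeas _ _ (measurableSet_fireworkWindow (S := Set.univ) fun _ _ _ => trivial))

end Firework

theorem rumor_stmt_2_general {Ω : Type*} [MeasurableSpace Ω] (P : Measure Ω) [IsProbabilityMeasure P]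
    (R : ℕ → Ω → ℕ) (hmeas : ∀ i, Measurable (R i))
    (hindep : iIndepFun R P)
    (hident : ∀ i, Measure.map (R i) P = Measure.map (R 0) P)
    (α : ℕ → ℝ≥0∞) (hα : ∀ k, P {ω | R 0 ω ≤ k} = α k) :
    P {ω | fireworkM R ω = ⊤} =
      (1 + ∑' j : ℕ, ∏ i ∈ Finset.range (j + 1), α i)⁻¹ := by
  have hlaw : ∀ j k, P {ω | R j ω ≤ k} = α k := fun j k =>
    ((IdentDistrib.mk (hmeas j).aemeasurable (hmeas 0).aemeasurable (hident j)).measure_mem_eq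
      (s := {n | n ≤ k}) .of_discrete).trans (hα k)
  have hrenewal : ∀ i, ∏ k ∈ range (i + 1), α k =
      ∑ m ∈ range (i + 1), P {ω | fireworkM R ω = m} * ∏ k ∈ range (i - m), α k := fun i =>
    calc ∏ k ∈ range (i + 1), α k = P (fireworkWindow R 0 i) :=
          (measure_fireworkWindow hindep hlaw 0 i).symm
      _ = _ := by
          rw [measure_fireworkWindow_zero_eq_sum hmeas hindep]
          simp only [measure_fireworkWindow hindep hlaw, Nat.add_sub_add_right]
  have hfinite : ∀ n, ∏ k ∈ range n, α k ≠ ⊤ := fun n =>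
    ENNReal.prod_ne_top fun k _ => hα k ▸ measure_ne_top P _
  rw [measure_eq_top_eq_one_sub_tsum P fun m =>
      radiiSigma_le hmeas _ _ (measurableSet_fireworkM_eq_coe m),
    one_sub_tsum_eq_inv_tsum_of_renewal (prod_range_zero α) hfinite hrenewal,
    tsum_eq_zero_add' ENNReal.summable, prod_range_zero]

/-- the probability of survival of the Firework process is
`P(M = ∞) = (1 + ∑_{j≥1} ∏_{i=0}^{j-1} α_i)⁻¹` (which is `0` when the series diverges). -/
theorem rumor_stmt_2 {Ω : Type*} [MeasurableSpace Ω] (P : Measure Ω) [IsProbabilityMeasure P]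
    (R : ℕ → Ω → ℕ) (hmeas : ∀ i, Measurable (R i))
    (hindep : iIndepFun R P)
    (hident : ∀ i, Measure.map (R i) P = Measure.map (R 0) P)
    (α : ℕ → ℝ≥0∞) (hα : ∀ k, P {ω | R 0 ω ≤ k} = α k)
    (hα0 : 0 < α 0 ∧ α 0 < 1) :
    P {ω | fireworkM R ω = ⊤} =
      (1 + ∑' j : ℕ, ∏ i ∈ Finset.range (j + 1), α i)⁻¹ :=
  rumor_stmt_2_general P R hmeas hindep hident α hα
end

section
/- The Firework process survives with positive probability (P(M = ∞) > 0) if and only if ∑_{j≥1} ∏_{i=0}^{j-1} α_i < ∞. -/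
/-!
Write `A n` (`Firework.stopSet R n`) for the event `R j ≤ n - j` for all `j ≤ n`, so that `M` is
the first `n` at which `A n` occurs, and `c m = ∏_{k<m} α_k`, so that `P (A n) = c (n + 1)`.
The event `{M = i}` depends only on `R_0, …, R_i`, and on it `A n` (for `n ≥ i`) reduces to the
independent event `R_j ≤ n - j` for `i < j ≤ n`. Splitting `A n` along the value of `M` gives the
renewal equation `c (n + 1) = ∑_{i ≤ n} P (M = i) c (n - i)`; by the Cauchy product
`∑ c = 1 + P (M < ∞) ∑ c`, so `∑ c < ∞` exactly when `P (M < ∞) < 1`.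
-/

open MeasureTheory ProbabilityTheory Filter Finset
open scoped ENNReal

theorem Finset.prod_Icc_reflect {M : Type*} [CommMonoid M] (f : ℕ → M) (a n : ℕ) :
    ∏ j ∈ Icc a n, f (n - j) = ∏ k ∈ range (n + 1 - a), f k :=
  prod_nbij' (n - ·) (n - ·) (by simp only [mem_Icc, mem_range]; omega)
    (by simp only [mem_Icc, mem_range]; omega) (by simp only [mem_Icc]; omega)
    (by simp only [mem_range]; omega) fun _ _ => rfl

namespace ENNReal

theorem tsum_mul_tsum_eq_tsum_sum_range_s3 (f g : ℕ → ℝ≥0∞) :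
    (∑' i, f i) * ∑' j, g j = ∑' n, ∑ i ∈ range (n + 1), f i * g (n - i) := by
  simp_rw [← Nat.sum_antidiagonal_eq_sum_range_succ fun k l => f k * g l,
    ← ENNReal.tsum_mul_right,
    ← ENNReal.tsum_mul_left, ← ENNReal.tsum_prod (f := fun k l => f k * g l),
    ← HasAntidiagonal.sigmaAntidiagonalEquivProd.tsum_eq (fun p : ℕ × ℕ => f p.1 * g p.2),
    ENNReal.tsum_sigma']
  congr 1; ext n
  exact (antidiagonal n).tsum_subtype (fun p : ℕ × ℕ => f p.1 * g p.2)

theorem sum_range_sum_mul_sub_le_tsum_mul_sum (f g : ℕ → ℝ≥0∞) (N : ℕ) :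
    ∑ n ∈ range N, ∑ i ∈ range (n + 1), f i * g (n - i) ≤ (∑' i, f i) * ∑ j ∈ range N, g j :=
  calc ∑ n ∈ range N, ∑ i ∈ range (n + 1), f i * g (n - i)
      = ∑ i ∈ range N, ∑ n ∈ Ico i N, f i * g (n - i) :=
        sum_comm' fun n i => by simp only [mem_range, mem_Ico]; omega
    _ = ∑ i ∈ range N, f i * ∑ k ∈ range (N - i), g k := by
        simp_rw [sum_Ico_eq_sum_range, mul_sum, Nat.add_sub_cancel_left]
    _ ≤ ∑ i ∈ range N, f i * ∑ k ∈ range N, g k := by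
        gcongr; exact Nat.sub_le _ _
    _ ≤ (∑' i, f i) * ∑ j ∈ range N, g j := by
        rw [← sum_mul]; gcongr; exact ENNReal.sum_le_tsum _

theorem one_add_mul_inv_one_sub {U : ℝ≥0∞} (hU : U < 1) : 1 + U * (1 - U)⁻¹ = (1 - U)⁻¹ := by
  have hne : 1 - U ≠ 0 := (tsub_pos_iff_lt.2 hU).ne'
  calc 1 + U * (1 - U)⁻¹ = (1 - U) * (1 - U)⁻¹ + U * (1 - U)⁻¹ := by
        rw [ENNReal.mul_inv_cancel hne (ENNReal.sub_ne_top ENNReal.one_ne_top)]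
    _ = (1 - U)⁻¹ := by rw [← add_mul, tsub_add_cancel_of_le hU.le, one_mul]

theorem tsum_lt_top_iff_tsum_lt_one_of_renewal {u c : ℕ → ℝ≥0∞} (hc0 : c 0 = 1)
    (hc : ∀ n, c (n + 1) = ∑ i ∈ range (n + 1), u i * c (n - i)) :
    ∑' m, c m < ⊤ ↔ ∑' i, u i < 1 := by
  set U := ∑' i, u i
  constructor
  · intro hS
    have hS_eq : ∑' m, c m = 1 + U * ∑' m, c m := by
      conv_lhs => rw [tsum_eq_zero_add' ENNReal.summable, hc0, tsum_congr hc,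
        ← tsum_mul_tsum_eq_tsum_sum_range_s3]
    by_contra! hU
    have : ∑' m, c m + 1 ≤ ∑' m, c m :=
      calc ∑' m, c m + 1 ≤ 1 + U * ∑' m, c m := by
            rw [add_comm]; gcongr; exact le_mul_of_one_le_left' hU
        _ = ∑' m, c m := hS_eq.symm
    exact (ENNReal.lt_add_right hS.ne one_ne_zero).not_ge this
  · intro hU
    have hpartial : ∀ N, ∑ m ∈ range N, c m ≤ (1 - U)⁻¹ := by
      intro N
      induction N with
      | zero => simp
      | succ N ih =>
        calc ∑ m ∈ range (N + 1), c m = 1 + ∑ n ∈ range N, c (n + 1) := by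
              rw [sum_range_succ', hc0, add_comm]
          _ ≤ 1 + U * ∑ m ∈ range N, c m := by
              simp_rw [hc]; gcongr; exact sum_range_sum_mul_sub_le_tsum_mul_sum u c N
          _ ≤ 1 + U * (1 - U)⁻¹ := by gcongr
          _ = (1 - U)⁻¹ := one_add_mul_inv_one_sub hU
    calc ∑' m, c m = ⨆ N, ∑ m ∈ range N, c m := ENNReal.tsum_eq_iSup_nat
      _ ≤ (1 - U)⁻¹ := iSup_le hpartial
      _ < ⊤ := ENNReal.inv_lt_top.2 (tsub_pos_iff_lt.2 hU)

end ENNReal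

namespace Firework

variable {Ω : Type*}

def stopSet (R : ℕ → Ω → ℕ) (n : ℕ) : Set Ω := {ω | ∀ j ≤ n, R j ω ≤ n - j}

variable {R : ℕ → Ω → ℕ} {ω : Ω} {n : ℕ}

theorem fireworkM_eq_coe_of_isLeast (h : IsLeast {k | ω ∈ stopSet R k} n) :
    fireworkM R ω = n :=
  le_antisymm (sInf_le ⟨n, rfl, h.1⟩) (le_sInf fun _ ⟨_, hN, hk⟩ => hN ▸ by exact_mod_cast h.2 hk)

theorem exists_fireworkM_eq_coe_le (h : ω ∈ stopSet R n) : ∃ i ≤ n, fireworkM R ω = i :=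
  ⟨_, Nat.sInf_le h, fireworkM_eq_coe_of_isLeast ⟨Nat.sInf_mem ⟨n, h⟩, fun _ hk => Nat.sInf_le hk⟩⟩

theorem fireworkM_eq_coe_iff : fireworkM R ω = n ↔ IsLeast {k | ω ∈ stopSet R k} n := by
  refine ⟨fun h => ?_, fireworkM_eq_coe_of_isLeast⟩
  obtain ⟨_, ⟨k, rfl, hk⟩, -⟩ :=
    not_forall₂.1 <| sInf_eq_top.not.1 (h.trans_ne (ENat.natCast_ne_top n))
  have hleast : IsLeast {k | ω ∈ stopSet R k} (sInf {k | ω ∈ stopSet R k}) :=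
    ⟨Nat.sInf_mem ⟨k, hk⟩, fun _ hj => Nat.sInf_le hj⟩
  rwa [← ENat.natCast_inj.1 ((fireworkM_eq_coe_of_isLeast hleast).symm.trans h)]

theorem setOf_fireworkM_eq_coe (n : ℕ) :
    {ω | fireworkM R ω = n} = stopSet R n \ ⋃ k ∈ range n, stopSet R k := by
  ext ω
  simp only [Set.mem_ofPred_eq, fireworkM_eq_coe_iff, IsLeast, mem_lowerBounds, Set.mem_sdiff,
    Set.mem_iUnion, mem_range, not_exists]
  refine and_congr_right fun _ => ⟨fun h k hk hmem => (h k hmem).not_gt hk, fun h k hmem => ?_⟩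
  by_contra! hk
  exact h k hk hmem

theorem stopSet_eq_biUnion (n : ℕ) :
    stopSet R n = ⋃ i ∈ range (n + 1), {ω | fireworkM R ω = i} ∩ stopSet R n := by
  ext ω
  simp only [Set.mem_iUnion, Set.mem_inter_iff, mem_range, Set.mem_ofPred_eq]
  refine ⟨fun h => ?_, fun ⟨_, _, _, h⟩ => h⟩
  obtain ⟨i, hi, hM⟩ := exists_fireworkM_eq_coe_le h
  exact ⟨i, Nat.lt_succ_of_le hi, hM, h⟩

theorem stopSet_eq_biInter (n : ℕ) : stopSet R n = ⋂ j ∈ Icc 0 n, R j ⁻¹' Set.Iic (n - j) := by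
  ext ω
  simp [stopSet]

abbrev sigmaOf (R : ℕ → Ω → ℕ) (s : Set ℕ) : MeasurableSpace Ω :=
  ⨆ j ∈ s, MeasurableSpace.comap (R j) inferInstance

theorem measurableSet_sigmaOf_preimage {s : Set ℕ} {j : ℕ} (hj : j ∈ s) (t : Set ℕ) :
    MeasurableSet[sigmaOf R s] (R j ⁻¹' t) :=
  le_biSup (fun j => MeasurableSpace.comap (R j) inferInstance) hj _ ⟨t, .of_discrete, rfl⟩

theorem measurableSet_stopSet {m : ℕ} (hn : n ≤ m) :
    MeasurableSet[sigmaOf R (Set.Iic m)] (stopSet R n) := by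
  rw [stopSet_eq_biInter]
  refine .iInter fun j => .iInter fun hj => measurableSet_sigmaOf_preimage ?_ _
  exact Set.mem_Iic.2 ((mem_Icc.1 hj).2.trans hn)

theorem measurableSet_fireworkM_eq_coe (n : ℕ) :
    MeasurableSet[sigmaOf R (Set.Iic n)] {ω | fireworkM R ω = n} := by
  rw [setOf_fireworkM_eq_coe]
  refine (measurableSet_stopSet le_rfl).diff (.iUnion fun k => .iUnion fun hk => ?_)
  exact measurableSet_stopSet (mem_range.1 hk).le

theorem pairwise_disjoint_fireworkM_eq_coe :
    Pairwise (Function.onFun Disjoint fun i : ℕ => {ω | fireworkM R ω = i}) :=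
  fun _ _ hij => Set.disjoint_left.2 fun _ hi hj => hij (ENat.natCast_inj.1 (hi.symm.trans hj))

variable [MeasurableSpace Ω] {P : Measure Ω} {α : ℕ → ℝ≥0∞}

theorem sigmaOf_le (hmeas : ∀ i, Measurable (R i)) (s : Set ℕ) :
    sigmaOf R s ≤ ‹MeasurableSpace Ω› :=
  iSup₂_le fun j _ => (hmeas j).comap_le

theorem measure_fireworkM_eq_top [IsProbabilityMeasure P] (hmeas : ∀ i, Measurable (R i)) :
    P {ω | fireworkM R ω = ⊤} = 1 - ∑' i : ℕ, P {ω | fireworkM R ω = i} := by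
  have hmeas_eq (i : ℕ) := sigmaOf_le hmeas _ _ (measurableSet_fireworkM_eq_coe (R := R) i)
  have htop : {ω | fireworkM R ω = ⊤} = (⋃ i : ℕ, {ω | fireworkM R ω = i})ᶜ := by
    ext ω
    simp only [Set.mem_ofPred_eq, Set.mem_compl_iff, Set.mem_iUnion, not_exists]
    induction fireworkM R ω using ENat.recTopCoe <;> simp
  rw [htop, prob_compl_eq_one_sub (.iUnion hmeas_eq),
    measure_iUnion pairwise_disjoint_fireworkM_eq_coe hmeas_eq]

theorem measure_biInter_preimage_Iic (hindep : iIndepFun R P)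
    (hcdf : ∀ j k, P {ω | R j ω ≤ k} = α k) (S : Finset ℕ) (k : ℕ → ℕ) :
    P (⋂ j ∈ S, R j ⁻¹' Set.Iic (k j)) = ∏ j ∈ S, α (k j) := by
  rw [hindep.meas_biInter fun j _ => ⟨_, .of_discrete, rfl⟩]
  exact prod_congr rfl fun j _ => hcdf j (k j)

theorem measure_stopSet (hindep : iIndepFun R P) (hcdf : ∀ j k, P {ω | R j ω ≤ k} = α k)
    (n : ℕ) : P (stopSet R n) = ∏ k ∈ range (n + 1), α k := by
  rw [stopSet_eq_biInter, measure_biInter_preimage_Iic hindep hcdf, prod_Icc_reflect,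
    Nat.sub_zero]

theorem measure_fireworkM_eq_coe_inter_stopSet (hmeas : ∀ i, Measurable (R i))
    (hindep : iIndepFun R P) (hcdf : ∀ j k, P {ω | R j ω ≤ k} = α k) {i : ℕ} (hi : i ≤ n) :
    P ({ω | fireworkM R ω = i} ∩ stopSet R n) =
      P {ω | fireworkM R ω = i} * ∏ k ∈ range (n - i), α k := by
  have hset : {ω | fireworkM R ω = i} ∩ stopSet R n =
      {ω | fireworkM R ω = i} ∩ ⋂ j ∈ Icc (i + 1) n, R j ⁻¹' Set.Iic (n - j) := by
    ext ω
    simp only [Set.mem_inter_iff, Set.mem_iInter, Set.mem_preimage, Set.mem_Iic, mem_Icc]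
    refine and_congr_right fun hM => ⟨fun h j hj => h j hj.2, fun h j hj => ?_⟩
    have hstop : ω ∈ stopSet R i := (fireworkM_eq_coe_iff.1 hM).1
    by_cases hji : j ≤ i
    · exact (hstop j hji).trans (Nat.sub_le_sub_right hi j)
    · exact h j ⟨by omega, hj⟩
  have hpast_future : Indep (sigmaOf R (Set.Iic i)) (sigmaOf R (Set.Ioi i)) P :=
    indep_iSup_of_disjoint (fun j => (hmeas j).comap_le) hindep.iIndep
      (Set.Iic_disjoint_Ioi le_rfl)
  rw [hset, (Indep_iff _ _ _).1 hpast_future _ _ (measurableSet_fireworkM_eq_coe i)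
      (.iInter fun j => .iInter fun hj =>
        measurableSet_sigmaOf_preimage (Set.mem_Ioi.2 (mem_Icc.1 hj).1) _),
    measure_biInter_preimage_Iic hindep hcdf, prod_Icc_reflect, Nat.add_sub_add_right]

theorem prod_range_succ_eq_sum_measure_mul (hmeas : ∀ i, Measurable (R i))
    (hindep : iIndepFun R P) (hcdf : ∀ j k, P {ω | R j ω ≤ k} = α k) (n : ℕ) :
    ∏ k ∈ range (n + 1), α k =
      ∑ i ∈ range (n + 1), P {ω | fireworkM R ω = i} * ∏ k ∈ range (n - i), α k := by
  rw [← measure_stopSet hindep hcdf, stopSet_eq_biUnion, measure_biUnion_finset]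
  · exact sum_congr rfl fun i hi =>
      measure_fireworkM_eq_coe_inter_stopSet hmeas hindep hcdf (Nat.le_of_lt_succ (mem_range.1 hi))
  · exact fun i _ j _ hij =>
      (pairwise_disjoint_fireworkM_eq_coe hij).mono Set.inter_subset_left Set.inter_subset_left
  · exact fun i _ => (sigmaOf_le hmeas _ _ (measurableSet_fireworkM_eq_coe i)).inter
      (sigmaOf_le hmeas _ _ (measurableSet_stopSet le_rfl))

end Firework

theorem rumor_stmt_3_general {Ω : Type*} [MeasurableSpace Ω] (P : Measure Ω) [IsProbabilityMeasure P]
    (R : ℕ → Ω → ℕ) (hmeas : ∀ i, Measurable (R i))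
    (hindep : iIndepFun R P)
    (hident : ∀ i, Measure.map (R i) P = Measure.map (R 0) P)
    (α : ℕ → ℝ≥0∞) (hα : ∀ k, P {ω | R 0 ω ≤ k} = α k) :
    0 < P {ω | fireworkM R ω = ⊤} ↔
      (∑' j : ℕ, ∏ i ∈ Finset.range (j + 1), α i) < ⊤ := by
  have hcdf : ∀ j k, P {ω | R j ω ≤ k} = α k := fun j k =>
    calc P {ω | R j ω ≤ k} = Measure.map (R j) P (Set.Iic k) :=
          (Measure.map_apply (hmeas j) (measurableSet_Iic (a := k))).symm
      _ = α k := by rw [hident, Measure.map_apply (hmeas 0) .of_discrete]; exact hα k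
  have hrenewal := ENNReal.tsum_lt_top_iff_tsum_lt_one_of_renewal
    (u := fun i : ℕ => P {ω | fireworkM R ω = i}) (c := fun m => ∏ k ∈ range m, α k)
    (prod_range_zero _) (Firework.prod_range_succ_eq_sum_measure_mul hmeas hindep hcdf)
  rw [Firework.measure_fireworkM_eq_top hmeas, tsub_pos_iff_lt, ← hrenewal,
    tsum_eq_zero_add' ENNReal.summable, prod_range_zero, ENNReal.add_lt_top,
    and_iff_right ENNReal.one_lt_top]

/-- the Firework process survives with positive probability iff
`∑_{j≥1} ∏_{i=0}^{j-1} α_i < ∞`. -/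
theorem rumor_stmt_3 {Ω : Type*} [MeasurableSpace Ω] (P : Measure Ω) [IsProbabilityMeasure P]
    (R : ℕ → Ω → ℕ) (hmeas : ∀ i, Measurable (R i))
    (hindep : iIndepFun R P)
    (hident : ∀ i, Measure.map (R i) P = Measure.map (R 0) P)
    (α : ℕ → ℝ≥0∞) (hα : ∀ k, P {ω | R 0 ω ≤ k} = α k)
    (hα0 : 0 < α 0 ∧ α 0 < 1) :
    0 < P {ω | fireworkM R ω = ⊤} ↔
      (∑' j : ℕ, ∏ i ∈ Finset.range (j + 1), α i) < ⊤ :=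
  rumor_stmt_3_general P R hmeas hindep hident α hα
end

section
/- For the Firework process, for every n ≥ 0, P(M > n) = u_{n+1}, where (u_n)_{n≥0} is the renewal sequence of the discrete renewal process with inter-arrival distribution q_k = (1-α_{k-1})·∏_{i=0}^{k-2} α_i on {1,2,...} ∪ {∞}. -/
open MeasureTheory ProbabilityTheory Filter Finset
open scoped ENNReal

section Independence

variable {Ω ι β : Type*} {mΩ : MeasurableSpace Ω} {mβ : MeasurableSpace β}

theorem measurable_iSup_comap {f : ι → Ω → β} {S : Set ι} {i : ι} (hi : i ∈ S) :
    Measurable[⨆ k ∈ S, mβ.comap (f k)] (f i) :=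
  measurable_iff_comap_le.2 (le_iSup₂ (f := fun k (_ : k ∈ S) => mβ.comap (f k)) i hi)

theorem ProbabilityTheory.iIndepFun.measure_inter_eq_mul_of_disjoint {P : Measure Ω}
    {f : ι → Ω → β} (hf : ∀ i, Measurable (f i)) (hindep : iIndepFun f P) {S T : Set ι}
    (hST : Disjoint S T)
    {A B : Set Ω} (hA : MeasurableSet[⨆ i ∈ S, mβ.comap (f i)] A)
    (hB : MeasurableSet[⨆ i ∈ T, mβ.comap (f i)] B) :
    P (A ∩ B) = P A * P B :=
  (Indep_iff _ _ P).1 (indep_iSup_of_disjoint (fun i => (hf i).comap_le) hindep.iIndep hST) _ _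
    hA hB

end Independence

theorem Finset.prod_Ioc_sub_eq_prod_range {M : Type*} [CommMonoid M] (f : ℕ → M) (j n : ℕ) :
    ∏ l ∈ Ioc j n, f (n - l) = ∏ i ∈ range (n - j), f i := by
  rw [← Ico_add_one_add_one_eq_Ioc, prod_Ico_reflect f _ le_rfl]
  simp

theorem Finset.sum_range_mul_sub_eq_sum_Icc {M : Type*} [CommSemiring M] (u q : ℕ → M) (n : ℕ) :
    ∑ j ∈ range (n + 1), u j * q (n + 1 - j) = ∑ k ∈ Icc 1 (n + 1), q k * u (n + 1 - k) := by
  have hreflect := sum_Ico_reflect (fun k => q k * u (n + 1 - k)) 0 (m := n + 1) (n := n + 1)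
    (by omega)
  rw [Nat.Ico_zero_eq_range, Nat.add_sub_cancel_left, Nat.sub_zero,
    Ico_add_one_right_eq_Icc] at hreflect
  rw [← hreflect]
  refine sum_congr rfl fun j hj => ?_
  rw [mul_comm, Nat.sub_sub_self (mem_range.1 hj).le]

namespace Firework

variable {Ω : Type*} (R : ℕ → Ω → ℕ)

noncomputable def interArrival (α : ℕ → ℝ≥0∞) (k : ℕ) : ℝ≥0∞ :=
  (1 - α (k - 1)) * ∏ i ∈ range (k - 1), α i

def notStoppedBefore (n : ℕ) : Set Ω :=
  {ω | ∀ i < n, ∃ j ≤ i, i - j < R j ω}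

def lastToPass (j n : ℕ) : Set Ω :=
  {ω | n - j < R j ω ∧ ∀ l, j < l → l ≤ n → R l ω ≤ n - l}

theorem setOf_lt_fireworkM (n : ℕ) :
    {ω | (n : ℕ∞) < fireworkM R ω} = notStoppedBefore R (n + 1) := by
  ext ω
  simp only [Set.mem_ofPred_eq, fireworkM, notStoppedBefore,
    ← ENat.add_one_le_iff (ENat.natCast_ne_top n), le_sInf_iff]
  constructor
  · intro h i hi
    by_contra! hstop
    have := h i ⟨i, rfl, hstop⟩
    norm_cast at this
    omega
  · rintro h _ ⟨i, rfl, hstop⟩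
    by_contra! hlt
    norm_cast at hlt
    obtain ⟨j, hj, hpass⟩ := h i (by omega)
    exact (hstop j hj).not_gt hpass

theorem notStoppedBefore_zero : notStoppedBefore R 0 = Set.univ := by
  ext ω; simp [notStoppedBefore]

theorem notStoppedBefore_succ (n : ℕ) :
    notStoppedBefore R (n + 1) =
      ⋃ j ∈ range (n + 1), notStoppedBefore R j ∩ lastToPass R j n := by
  ext ω
  simp only [Set.mem_iUnion, Set.mem_inter_iff, mem_range, exists_prop]
  constructor
  · intro h
    obtain ⟨j₀, hj₀, hpass₀⟩ := h n n.lt_succ_self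
    let P j := n - j < R j ω
    have hjn : Nat.findGreatest P n ≤ n := Nat.findGreatest_le n
    refine ⟨Nat.findGreatest P n, by omega, fun i hi => h i (by omega),
      Nat.findGreatest_spec (P := P) hj₀ hpass₀,
      fun l hjl hln => not_lt.1 (Nat.findGreatest_is_greatest (P := P) hjl hln)⟩
  · rintro ⟨j, hjn, hE, hpass, -⟩ i hi
    rcases lt_or_ge i j with hij | hji
    · exact hE i hij
    · exact ⟨j, hji, by omega⟩

theorem pairwiseDisjoint_lastToPass (n : ℕ) :
    (range (n + 1) : Set ℕ).PairwiseDisjoint (lastToPass R · n) := by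
  intro a ha b hb hab
  simp only [coe_range, Set.mem_Iio] at ha hb
  rcases hab.lt_or_gt with h | h
  · exact Set.disjoint_left.2 fun ω hωa hωb => (hωa.2 b h (by omega)).not_gt hωb.1
  · exact Set.disjoint_right.2 fun ω hωb hωa => (hωb.2 a h (by omega)).not_gt hωa.1

theorem lastToPass_eq (j n : ℕ) :
    lastToPass R j n = R j ⁻¹' Set.Ioi (n - j) ∩ ⋂ l ∈ Ioc j n, R l ⁻¹' Set.Iic (n - l) := by
  ext ω; simp [lastToPass, and_imp]

section Measurability

variable {mΩ : MeasurableSpace Ω}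

theorem measurableSet_notStoppedBefore {n : ℕ} (hR : ∀ i < n, Measurable (R i)) :
    MeasurableSet (notStoppedBefore R n) := by
  have hset : notStoppedBefore R n =
      ⋂ i ∈ Set.Iio n, ⋃ j ∈ Set.Iic i, R j ⁻¹' Set.Ioi (i - j) := by
    ext ω; simp [notStoppedBefore]
  rw [hset]
  exact .biInter (Set.to_countable _) fun i hi => .biUnion (Set.to_countable _) fun j hj =>
    hR j (lt_of_le_of_lt hj hi) measurableSet_Ioi

theorem measurableSet_lastToPass {j n : ℕ} (hjn : j ≤ n)
    (hR : ∀ l ∈ Set.Icc j n, Measurable (R l)) :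
    MeasurableSet (lastToPass R j n) := by
  rw [lastToPass_eq]
  exact (hR j ⟨le_rfl, hjn⟩ measurableSet_Ioi).inter <| .biInter (Set.to_countable _) fun l hl =>
    hR l (Set.Ioc_subset_Icc_self (by simpa using hl)) measurableSet_Iic

end Measurability

section Probability

variable {mΩ : MeasurableSpace Ω} {P : Measure Ω} {R} {α : ℕ → ℝ≥0∞}

theorem measure_notStoppedBefore_inter_lastToPass (hmeas : ∀ i, Measurable (R i))
    (hindep : iIndepFun R P) {j n : ℕ} (hjn : j ≤ n) :
    P (notStoppedBefore R j ∩ lastToPass R j n) =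
      P (notStoppedBefore R j) * P (lastToPass R j n) :=
  hindep.measure_inter_eq_mul_of_disjoint hmeas (S := Set.Iio j) (T := Set.Icc j n)
    (Set.disjoint_left.2 fun _ hi hi' => not_le.2 hi hi'.1)
    (measurableSet_notStoppedBefore R fun _ hi => measurable_iSup_comap hi)
    (measurableSet_lastToPass R hjn fun _ hl => measurable_iSup_comap hl)

theorem measure_lastToPass [IsProbabilityMeasure P] (hmeas : ∀ i, Measurable (R i))
    (hindep : iIndepFun R P) (hident : ∀ i, Measure.map (R i) P = Measure.map (R 0) P)
    (hα : ∀ k, P {ω | R 0 ω ≤ k} = α k) {j n : ℕ} (hjn : j ≤ n) :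
    P (lastToPass R j n) = interArrival α (n + 1 - j) := by
  have hIic (l c : ℕ) : P (R l ⁻¹' Set.Iic c) = α c :=
    (IdentDistrib.mk (hmeas l).aemeasurable (hmeas 0).aemeasurable (hident l)).measure_mem_eq
      measurableSet_Iic |>.trans (hα c)
  have hIoi (l c : ℕ) : P (R l ⁻¹' Set.Ioi c) = 1 - α c := by
    rw [← Set.compl_Iic, Set.preimage_compl, prob_compl_eq_one_sub (hmeas l measurableSet_Iic),
      hIic]
  have hsplit := hindep.measure_inter_eq_mul_of_disjoint hmeas (S := {j})
    (T := ↑(Ioc j n)) (by simp) (A := R j ⁻¹' Set.Ioi (n - j))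
    (B := ⋂ l ∈ Ioc j n, R l ⁻¹' Set.Iic (n - l))
    (measurable_iSup_comap (Set.mem_singleton j) measurableSet_Ioi)
    (.biInter (Set.to_countable _) fun l hl => measurable_iSup_comap hl measurableSet_Iic)
  rw [lastToPass_eq, hsplit,
    hindep.measure_inter_preimage_eq_mul (Ioc j n) fun _ _ => measurableSet_Iic, hIoi]
  simp only [hIic, prod_Ioc_sub_eq_prod_range, interArrival]
  rw [show n + 1 - j - 1 = n - j by omega]

theorem measure_notStoppedBefore [IsProbabilityMeasure P] (hmeas : ∀ i, Measurable (R i))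
    (hindep : iIndepFun R P) (hident : ∀ i, Measure.map (R i) P = Measure.map (R 0) P)
    (hα : ∀ k, P {ω | R 0 ω ≤ k} = α k) {u : ℕ → ℝ≥0∞} (hu0 : u 0 = 1)
    (hurec : ∀ n, u (n + 1) = ∑ k ∈ Icc 1 (n + 1), interArrival α k * u (n + 1 - k)) (n : ℕ) :
    P (notStoppedBefore R n) = u n := by
  induction n using Nat.strong_induction_on with
  | _ n ih =>
  cases n with
  | zero => rw [notStoppedBefore_zero, measure_univ, hu0]
  | succ n =>
    calc P (notStoppedBefore R (n + 1))
        = ∑ j ∈ range (n + 1), P (notStoppedBefore R j ∩ lastToPass R j n) := by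
          rw [notStoppedBefore_succ, measure_biUnion_finset
            ((pairwiseDisjoint_lastToPass R n).mono fun _ => Set.inter_subset_right)
            fun j hj => (measurableSet_notStoppedBefore R fun i _ => hmeas i).inter
              (measurableSet_lastToPass R (mem_range_succ_iff.1 hj) fun l _ => hmeas l)]
      _ = ∑ j ∈ range (n + 1), u j * interArrival α (n + 1 - j) := by
          refine sum_congr rfl fun j hj => ?_
          have hjn : j ≤ n := mem_range_succ_iff.1 hj
          rw [measure_notStoppedBefore_inter_lastToPass hmeas hindep hjn, ih j (by omega),
            measure_lastToPass hmeas hindep hident hα hjn]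
      _ = u (n + 1) := by rw [sum_range_mul_sub_eq_sum_Icc, hurec]

end Probability

end Firework

theorem rumor_stmt_4_general {Ω : Type*} [MeasurableSpace Ω] (P : Measure Ω) [IsProbabilityMeasure P]
    (R : ℕ → Ω → ℕ) (hmeas : ∀ i, Measurable (R i))
    (hindep : iIndepFun R P)
    (hident : ∀ i, Measure.map (R i) P = Measure.map (R 0) P)
    (α : ℕ → ℝ≥0∞) (hα : ∀ k, P {ω | R 0 ω ≤ k} = α k)
    (u : ℕ → ℝ≥0∞) (hu0 : u 0 = 1)
    (hurec : ∀ n : ℕ, u (n + 1) =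
      ∑ k ∈ Finset.Icc 1 (n + 1),
        ((1 - α (k - 1)) * ∏ i ∈ Finset.range (k - 1), α i) * u (n + 1 - k)) :
    ∀ n : ℕ, P {ω | (n : ℕ∞) < fireworkM R ω} = u (n + 1) := by
  intro n
  rw [Firework.setOf_lt_fireworkM,
    Firework.measure_notStoppedBefore hmeas hindep hident hα hu0 hurec]

/-- `P(M > n) = u_{n+1}` where `(u_n)` is the renewal sequence of the discrete
renewal process with inter-arrival distribution `q_k = (1-α_{k-1})∏_{i=0}^{k-2}α_i`,
characterized by the renewal equation `u_0 = 1`, `u_n = ∑_{k=1}^n q_k u_{n-k}`. -/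
theorem rumor_stmt_4 {Ω : Type*} [MeasurableSpace Ω] (P : Measure Ω) [IsProbabilityMeasure P]
    (R : ℕ → Ω → ℕ) (hmeas : ∀ i, Measurable (R i))
    (hindep : iIndepFun R P)
    (hident : ∀ i, Measure.map (R i) P = Measure.map (R 0) P)
    (α : ℕ → ℝ≥0∞) (hα : ∀ k, P {ω | R 0 ω ≤ k} = α k)
    (hα0 : 0 < α 0 ∧ α 0 < 1)
    (u : ℕ → ℝ≥0∞) (hu0 : u 0 = 1)
    (hurec : ∀ n : ℕ, u (n + 1) =
      ∑ k ∈ Finset.Icc 1 (n + 1),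
        ((1 - α (k - 1)) * ∏ i ∈ Finset.range (k - 1), α i) * u (n + 1 - k)) :
    ∀ n : ℕ, P {ω | (n : ℕ∞) < fireworkM R ω} = u (n + 1) :=
  rumor_stmt_4_general P R hmeas hindep hident α hα u hu0 hurec
end

section
/- The coupled family of chains (H^{(m)})_{m∈ℤ} coalesces at 0: if H^{(m)}_n = 0 for some m ≤ n, then for all k with m ≤ k ≤ n and all t ≥ n, H^{(m)}_t = H^{(k)}_t. -/
/-- coalescence at `0` of the coupled family of chains `H^{(m)}`:
if `H^{(m)}_n = 0` for some `m ≤ n`, then for all `k` with `m ≤ k ≤ n` and all `t ≥ n`,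
`H^{(m)}_t = H^{(k)}_t`. -/
theorem rumor_stmt_6 (α : ℕ → ℝ) (hmono : Monotone α) (U : ℤ → ℝ)
    (H : ℤ → ℤ → ℕ)
    (hH0 : ∀ m : ℤ, H m m = 0)
    (hHrec : ∀ m n : ℤ, m < n →
      H m n = if U n < α (H m (n - 1)) then H m (n - 1) + 1 else 0) :
    ∀ m k n t : ℤ, m ≤ k → k ≤ n → n ≤ t → H m n = 0 → H m t = H k t := by
  -- domination: for m ≤ k ≤ n, H k n ≤ H m n
  have hdom : ∀ m k : ℤ, m ≤ k → ∀ n : ℤ, k ≤ n → H k n ≤ H m n := by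
    intro m k hmk
    refine Int.le_induction ?_ ?_
    · rw [hH0]; exact Nat.zero_le _
    · intro n hkn ih
      have hk : k < n + 1 := by omega
      have hm : m < n + 1 := by omega
      rw [hHrec k (n+1) hk, hHrec m (n+1) hm]
      simp only [add_sub_cancel_right]
      by_cases h : U (n+1) < α (H k n)
      · have h2 : U (n+1) < α (H m n) := lt_of_lt_of_le h (hmono ih)
        simp only [h, h2, if_true]
        omega
      · simp [h]
  -- propagation of equality forward in time
  have hprop : ∀ m k n : ℤ, m ≤ n → k ≤ n → H m n = H k n →
      ∀ t : ℤ, n ≤ t → H m t = H k t := by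
    intro m k n hmn hkn heq
    refine Int.le_induction ?_ ?_
    · exact heq
    · intro t hnt ih
      have hm : m < t + 1 := by omega
      have hk : k < t + 1 := by omega
      rw [hHrec m (t+1) hm, hHrec k (t+1) hk]
      simp only [add_sub_cancel_right, ih]
  intro m k n t hmk hkn hnt h0
  have hkn0 : H k n = 0 := by
    have := hdom m k hmk n hkn
    omega
  exact hprop m k n (le_trans hmk hkn) hkn (by rw [h0, hkn0]) t hnt
end

section
/- If ∏_{k≥0} α_k > 0, then the final range M of the Firework process has finite expectation. -/
/-!
Write `b n = P (n ≤ M)`. If `M > n`, let `j ≤ n` be the last spreader whose radius reaches past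
site `n`. Then `M ≥ j`, spreader `j` reaches past `n`, and none of `j + 1, …, n` does; the first
event depends only on `R 0, …, R (j - 1)` and the other two only on `R j, …, R n`. This gives the
defective renewal inequality `b (n + 1) ≤ ∑ j ≤ n, f (n - j) * b j` with
`f k = ∏ i < k, α i - ∏ i ≤ k, α i`, whose total mass is at most `1 - ∏ α < 1`. Hence
`E M = ∑ P (M > n) ≤ ∑ b n ≤ (∏ α)⁻¹ < ∞`.
-/

open MeasureTheory ProbabilityTheory Filter Finset
open scoped ENNReal

lemma ENat.toENNReal_eq_tsum_indicator (a : ℕ∞) :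
    (a : ℝ≥0∞) = ∑' n : ℕ, {n : ℕ | (n : ℕ∞) < a}.indicator (fun _ => 1) n := by
  rw [← _root_.tsum_subtype, ENNReal.tsum_set_one]
  congr 1
  induction a using ENat.recTopCoe with
  | top => simp
  | coe m =>
    have : {n : ℕ | (n : ℕ∞) < m} = (range m : Set ℕ) := by ext; simp
    rw [this, Set.encard_coe_eq_coe_finsetCard, card_range]

lemma MeasureTheory.lintegral_enat_eq_tsum_measure_lt {Ω : Type*} [MeasurableSpace Ω]
    (μ : Measure Ω) {f : Ω → ℕ∞} (hf : ∀ n : ℕ, MeasurableSet {ω | (n : ℕ∞) < f ω}) :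
    ∫⁻ ω, (f ω : ℝ≥0∞) ∂μ = ∑' n : ℕ, μ {ω | (n : ℕ∞) < f ω} := by
  have hsum : ∀ ω, (f ω : ℝ≥0∞) = ∑' n : ℕ, {ω | (n : ℕ∞) < f ω}.indicator (fun _ => 1) ω :=
      fun ω => by
    rw [ENat.toENNReal_eq_tsum_indicator]
    exact tsum_congr fun n => by simp only [Set.indicator_apply, Set.mem_ofPred_eq]
  simp_rw [hsum]
  rw [lintegral_tsum fun n => (measurable_const.indicator (hf n)).aemeasurable]
  exact tsum_congr fun n => lintegral_indicator_one (hf n)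

lemma ENNReal.sum_range_prod_sub_prod_succ {α : ℕ → ℝ≥0∞} (hα : ∀ k, α k ≤ 1) (N : ℕ) :
    ∑ k ∈ range N, (∏ i ∈ range k, α i - ∏ i ∈ range (k + 1), α i) =
      1 - ∏ i ∈ range N, α i := by
  induction N with
  | zero => simp
  | succ N ih =>
    have hprod : ∏ i ∈ range N, α i ≤ 1 := prod_le_one' fun i _ => hα i
    rw [sum_range_succ, ih, prod_range_succ,
      tsub_add_tsub_cancel hprod (mul_le_of_le_one_right' (hα N))]

lemma ENNReal.tsum_le_inv_one_sub_of_renewal_le {b f : ℕ → ℝ≥0∞} {p : ℝ≥0∞} (hp : p < 1)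
    (hb0 : b 0 ≤ 1) (hf : ∀ N, ∑ k ∈ range N, f k ≤ p)
    (hrec : ∀ n, b (n + 1) ≤ ∑ j ∈ range (n + 1), f (n - j) * b j) :
    ∑' n, b n ≤ (1 - p)⁻¹ := by
  have hfix : 1 + p * (1 - p)⁻¹ = (1 - p)⁻¹ := by
    have hne : 1 - p ≠ 0 := (tsub_pos_of_lt hp).ne'
    calc 1 + p * (1 - p)⁻¹ = ((1 - p) + p) * (1 - p)⁻¹ := by
          rw [add_mul, ENNReal.mul_inv_cancel hne (sub_ne_top one_ne_top)]
      _ = (1 - p)⁻¹ := by rw [tsub_add_cancel_of_le hp.le, one_mul]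
  have hconv : ∀ N, ∑ n ∈ range N, ∑ j ∈ range (n + 1), f (n - j) * b j ≤
      p * ∑ j ∈ range N, b j := by
    intro N
    have hswap : ∀ n j, n ∈ range N ∧ j ∈ range (n + 1) ↔ n ∈ Ico j N ∧ j ∈ range N := by
      intro n j
      simp only [mem_range, Order.lt_add_one_iff, mem_Ico]
      omega
    rw [sum_comm' hswap, mul_sum]
    refine sum_le_sum fun j _ => ?_
    rw [← sum_mul, sum_Ico_eq_sum_range]
    simp only [Nat.add_sub_cancel_left]
    exact mul_le_mul_left (hf _) _
  refine ENNReal.tsum_le_of_sum_range_le fun N => ?_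
  induction N with
  | zero => simp
  | succ N ih =>
    calc ∑ n ∈ range (N + 1), b n = b 0 + ∑ n ∈ range N, b (n + 1) := by
          rw [sum_range_succ', add_comm]
      _ ≤ 1 + p * ∑ j ∈ range N, b j :=
          add_le_add hb0 ((sum_le_sum fun n _ => hrec n).trans (hconv N))
      _ ≤ 1 + p * (1 - p)⁻¹ := by gcongr
      _ = (1 - p)⁻¹ := hfix

section Firework

variable {Ω : Type*} (R : ℕ → Ω → ℕ)

/-- The event `n ≤ fireworkM R`. -/
def fireworkContinues (n : ℕ) : Set Ω := {ω | ∀ i < n, ∃ l ≤ i, i - l < R l ω}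

/-- No spreader among `j, …, n` reaches past site `n`. -/
def fireworkQuiet (n j : ℕ) : Set Ω := ⋂ l ∈ Icc j n, R l ⁻¹' Set.Iic (n - l)

lemma setOf_natCast_lt_fireworkM (n : ℕ) :
    {ω | (n : ℕ∞) < fireworkM R ω} = fireworkContinues R (n + 1) := by
  ext ω
  rw [Set.mem_ofPred_eq, fireworkM, ← ENat.add_one_le_iff (ENat.natCast_ne_top n), le_sInf_iff]
  simp only [fireworkContinues, Set.mem_ofPred_eq, forall_exists_index, and_imp]
  rw [forall_comm]
  simp only [forall_eq]
  refine forall_congr' fun i => ?_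
  norm_cast
  rw [← not_imp_not]
  push Not
  rfl

lemma fireworkQuiet_subset_succ (n j : ℕ) : fireworkQuiet R n j ⊆ fireworkQuiet R n (j + 1) :=
  Set.biInter_subset_biInter_left (coe_subset.mpr (Icc_subset_Icc_left j.le_succ))

lemma fireworkContinues_succ_subset (n : ℕ) :
    fireworkContinues R (n + 1) ⊆
      ⋃ j ∈ range (n + 1),
        fireworkContinues R j ∩ (fireworkQuiet R n (j + 1) \ fireworkQuiet R n j) := by
  intro ω hω
  obtain ⟨l, hl, hRl⟩ := hω n n.lt_succ_self
  set J := Nat.findGreatest (fun l => n - l < R l ω) n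
  have hJ : n - J < R J ω := Nat.findGreatest_spec (P := fun l => n - l < R l ω) hl hRl
  have hJn : J ≤ n := Nat.findGreatest_le n
  simp only [Set.mem_iUnion, Set.mem_inter_iff, Set.mem_sdiff, fireworkQuiet, Set.mem_iInter,
    Set.mem_preimage, Set.mem_Iic, mem_Icc, mem_range, not_forall, not_le]
  refine ⟨J, by omega, fun i hi => hω i (by omega), fun k hk => ?_, J, ⟨le_rfl, hJn⟩, hJ⟩
  exact not_lt.mp (Nat.findGreatest_is_greatest (P := fun l => n - l < R l ω) (by omega) hk.2)

lemma measurableSet_iSup_comap_preimage {ι β : Type*} [MeasurableSpace β] (f : ι → Ω → β)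
    {S : Set ι} {i : ι} (hi : i ∈ S) {A : Set β} (hA : MeasurableSet A) :
    MeasurableSet[⨆ j ∈ S, MeasurableSpace.comap (f j) inferInstance] (f i ⁻¹' A) := by
  have := le_iSup₂ (f := fun j (_ : j ∈ S) => MeasurableSpace.comap (f j) inferInstance) i hi
  exact this _ ⟨A, hA, rfl⟩

lemma measurableSet_fireworkContinues (n : ℕ) :
    MeasurableSet[⨆ i ∈ (range n : Set ℕ), MeasurableSpace.comap (R i) inferInstance]
      (fireworkContinues R n) := by
  have : fireworkContinues R n = ⋂ i ∈ range n, ⋃ l ∈ range (i + 1), R l ⁻¹' Set.Ioi (i - l) := by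
    ext ω; simp [fireworkContinues]
  rw [this]
  refine Finset.measurableSet_biInter _ fun i hi => Finset.measurableSet_biUnion _ fun l hl => ?_
  have hl' : l ∈ (range n : Set ℕ) := by
    simp only [mem_range, coe_range, Set.mem_Iio] at hi hl ⊢
    omega
  exact measurableSet_iSup_comap_preimage R hl' measurableSet_Ioi

lemma measurableSet_fireworkQuiet {n j : ℕ} {S : Set ℕ} (hS : (Icc j n : Set ℕ) ⊆ S) :
    MeasurableSet[⨆ i ∈ S, MeasurableSpace.comap (R i) inferInstance] (fireworkQuiet R n j) :=
  Finset.measurableSet_biInter _ fun _ hl =>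
    measurableSet_iSup_comap_preimage R (hS hl) measurableSet_Iic

end Firework

section Probability

variable {Ω : Type*} [MeasurableSpace Ω] {P : Measure Ω} {R : ℕ → Ω → ℕ}

lemma measure_fireworkQuiet (hindep : iIndepFun R P)
    (hident : ∀ i, Measure.map (R i) P = Measure.map (R 0) P) (hmeas : ∀ i, Measurable (R i))
    {α : ℕ → ℝ≥0∞} (hα : ∀ k, P {ω | R 0 ω ≤ k} = α k) (n j : ℕ) :
    P (fireworkQuiet R n j) = ∏ i ∈ range (n + 1 - j), α i := by
  have hR : ∀ l k, P (R l ⁻¹' Set.Iic k) = α k := fun l k => by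
    rw [← Measure.map_apply (hmeas l) measurableSet_Iic, hident l,
      Measure.map_apply (hmeas 0) measurableSet_Iic, ← hα k]
    rfl
  rw [fireworkQuiet, hindep.measure_inter_preimage_eq_mul _ fun _ _ => measurableSet_Iic]
  simp only [hR]
  rw [← Ico_add_one_right_eq_Icc, prod_Ico_eq_prod_range, ← prod_range_reflect α]
  refine prod_congr rfl fun i hi => ?_
  congr 1
  rw [mem_range] at hi
  omega

lemma measure_fireworkContinues_inter_fireworkQuiet (hindep : iIndepFun R P)
    (hmeas : ∀ i, Measurable (R i)) (n j : ℕ) :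
    P (fireworkContinues R j ∩ (fireworkQuiet R n (j + 1) \ fireworkQuiet R n j)) =
      P (fireworkContinues R j) * P (fireworkQuiet R n (j + 1) \ fireworkQuiet R n j) := by
  have hdisj : Disjoint (range j : Set ℕ) (Icc j n : Set ℕ) := by
    rw [Finset.disjoint_coe, Finset.disjoint_left]
    simp only [mem_range, mem_Icc]
    omega
  refine (Indep_iff _ _ P).1 (indep_iSup_of_disjoint (fun i => (hmeas i).comap_le) hindep.iIndep
    hdisj) _ _ (measurableSet_fireworkContinues R j) ?_
  exact (measurableSet_fireworkQuiet R (coe_subset.mpr (Icc_subset_Icc_left j.le_succ))).diff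
    (measurableSet_fireworkQuiet R subset_rfl)

lemma measure_fireworkContinues_succ_le [IsFiniteMeasure P] (hindep : iIndepFun R P)
    (hident : ∀ i, Measure.map (R i) P = Measure.map (R 0) P) (hmeas : ∀ i, Measurable (R i))
    {α : ℕ → ℝ≥0∞} (hα : ∀ k, P {ω | R 0 ω ≤ k} = α k) (n : ℕ) :
    P (fireworkContinues R (n + 1)) ≤ ∑ j ∈ range (n + 1),
      (∏ i ∈ range (n - j), α i - ∏ i ∈ range (n - j + 1), α i) * P (fireworkContinues R j) := by
  calc P (fireworkContinues R (n + 1))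
      ≤ P (⋃ j ∈ range (n + 1),
          fireworkContinues R j ∩ (fireworkQuiet R n (j + 1) \ fireworkQuiet R n j)) :=
        measure_mono (fireworkContinues_succ_subset R n)
    _ ≤ ∑ j ∈ range (n + 1),
          P (fireworkContinues R j ∩ (fireworkQuiet R n (j + 1) \ fireworkQuiet R n j)) :=
        measure_biUnion_finset_le _ _
    _ = _ := by
      refine sum_congr rfl fun j hj => ?_
      have hQ : MeasurableSet (fireworkQuiet R n j) :=
        Finset.measurableSet_biInter _ fun l _ => hmeas l measurableSet_Iic
      rw [measure_fireworkContinues_inter_fireworkQuiet hindep hmeas,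
        measure_sdiff (fireworkQuiet_subset_succ R n j) hQ.nullMeasurableSet (measure_ne_top _ _),
        measure_fireworkQuiet hindep hident hmeas hα, measure_fireworkQuiet hindep hident hmeas hα,
        mul_comm, Nat.add_sub_add_right, Nat.sub_add_comm (mem_range_succ_iff.mp hj)]

end Probability

theorem rumor_stmt_9_general {Ω : Type*} [MeasurableSpace Ω] (P : Measure Ω) [IsProbabilityMeasure P]
    (R : ℕ → Ω → ℕ) (hmeas : ∀ i, Measurable (R i))
    (hindep : iIndepFun R P)
    (hident : ∀ i, Measure.map (R i) P = Measure.map (R 0) P)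
    (α : ℕ → ℝ≥0∞) (hα : ∀ k, P {ω | R 0 ω ≤ k} = α k)
    (L : ℝ≥0∞) (hLpos : 0 < L)
    (hprod : Tendsto (fun n => ∏ i ∈ Finset.range n, α i) atTop (nhds L)) :
    (∫⁻ ω, (fireworkM R ω : ℝ≥0∞) ∂P) < ⊤ := by
  have hα1 : ∀ k, α k ≤ 1 := fun k => hα k ▸ prob_le_one
  have hanti : Antitone fun n => ∏ i ∈ range n, α i :=
    antitone_nat_of_succ_le fun n => by rw [prod_range_succ]; exact mul_le_of_le_one_right' (hα1 n)
  have hL : ∀ n, L ≤ ∏ i ∈ range n, α i := hanti.le_of_tendsto hprod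
  have hmass : ∀ N, ∑ k ∈ range N, (∏ i ∈ range k, α i - ∏ i ∈ range (k + 1), α i) ≤ 1 - L :=
    fun N => (ENNReal.sum_range_prod_sub_prod_succ hα1 N).trans_le (tsub_le_tsub_left (hL N) 1)
  have hB : ∀ n, MeasurableSet (fireworkContinues R n) := fun n =>
    iSup₂_le (fun i _ => (hmeas i).comap_le) _ (measurableSet_fireworkContinues R n)
  have hsum := ENNReal.tsum_le_inv_one_sub_of_renewal_le
    (ENNReal.sub_lt_self ENNReal.one_ne_top one_ne_zero hLpos.ne') prob_le_one hmass
    (measure_fireworkContinues_succ_le hindep hident hmeas hα)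
  rw [lintegral_enat_eq_tsum_measure_lt P fun n => setOf_natCast_lt_fireworkM R n ▸ hB (n + 1)]
  simp_rw [setOf_natCast_lt_fireworkM]
  calc ∑' n, P (fireworkContinues R (n + 1))
      ≤ ∑' n, P (fireworkContinues R n) :=
        ENNReal.tsum_comp_le_tsum_of_injective (add_left_injective 1) _
    _ ≤ (1 - (1 - L))⁻¹ := hsum
    _ < ⊤ := by
      rw [ENNReal.sub_sub_cancel ENNReal.one_ne_top (by simpa using hL 0)]
      exact ENNReal.inv_lt_top.mpr hLpos

/-- if `∏_{k≥0} α_k > 0` then the final range `M` of the Firework process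
has finite expectation. -/
theorem rumor_stmt_9 {Ω : Type*} [MeasurableSpace Ω] (P : Measure Ω) [IsProbabilityMeasure P]
    (R : ℕ → Ω → ℕ) (hmeas : ∀ i, Measurable (R i))
    (hindep : iIndepFun R P)
    (hident : ∀ i, Measure.map (R i) P = Measure.map (R 0) P)
    (α : ℕ → ℝ≥0∞) (hα : ∀ k, P {ω | R 0 ω ≤ k} = α k)
    (hle1 : ∀ k, α k ≤ 1) (hα0 : 0 < α 0 ∧ α 0 < 1)
    (L : ℝ≥0∞) (hLpos : 0 < L)
    (hprod : Tendsto (fun n => ∏ i ∈ Finset.range n, α i) atTop (nhds L)) :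
    (∫⁻ ω, (fireworkM R ω : ℝ≥0∞) ∂P) < ⊤ :=
  rumor_stmt_9_general P R hmeas hindep hident α hα L hLpos hprod
end

section
/- In the Reverse Firework process on ℕ, if ∏_{k≥0} α_k = 0 then the rumor survives almost surely: P(N = ∞) = 1, where N is the final number of spreaders. -/
open MeasureTheory ProbabilityTheory Filter Finset
open scoped ENNReal

/-!
If only finitely many sites are informed and `M` is the last of them, then every site `M + k + 1`
has radius `R (M + k + 1) ≤ k`. For fixed `M` these events are independent with probabilities
`α k`, so their intersection has probability at most `∏_{k < K} α k → 0`; the union over `M`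
is still null.
-/

theorem ProbabilityTheory.iIndepFun.measure_iInter_preimage_eq_zero {Ω β : Type*}
    [MeasurableSpace Ω] [MeasurableSpace β] {P : Measure Ω} {X : ℕ → Ω → β}
    (hX : iIndepFun X P) {s : ℕ → Set β} (hs : ∀ k, MeasurableSet (s k))
    (hprod : Tendsto (fun n => ∏ k ∈ range n, P (X k ⁻¹' s k)) atTop (nhds 0)) :
    P (⋂ k, X k ⁻¹' s k) = 0 := by
  refine le_antisymm (ge_of_tendsto' hprod fun n => ?_) zero_le
  rw [← hX.measure_inter_preimage_eq_mul (range n) fun k _ => hs k]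
  exact measure_mono fun ω hω => Set.mem_iInter₂.2 fun k _ => Set.mem_iInter.1 hω k

theorem exists_forall_radius_le_of_finite {z : ℕ → Bool} {r : ℕ → ℕ} (hz0 : z 0 = true)
    (hz : ∀ n m, m < n → z m = true → n - m ≤ r n → z n = true)
    (hfin : {n | z n = true}.Finite) : ∃ M, ∀ k, r (M + k + 1) ≤ k := by
  obtain ⟨M, hM, hmax⟩ := Set.exists_max_image _ id hfin ⟨0, hz0⟩
  refine ⟨M, fun k => ?_⟩
  by_contra! hk
  have := hmax _ (hz (M + k + 1) M (by omega) hM (by omega))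
  simp only [id] at this
  omega

theorem rumor_stmt_10_general {Ω : Type*} [MeasurableSpace Ω] (P : Measure Ω) [IsProbabilityMeasure P]
    (R : ℕ → Ω → ℕ) (hmeas : ∀ i, Measurable (R i))
    (hindep : iIndepFun R P)
    (hident : ∀ i, Measure.map (R i) P = Measure.map (R 0) P)
    (α : ℕ → ℝ≥0∞) (hα : ∀ k, P {ω | R 0 ω ≤ k} = α k)
    (hprod0 : Tendsto (fun n => ∏ i ∈ Finset.range n, α i) atTop (nhds 0))
    (ζ : ℕ → Ω → Bool)
    (hζ0 : ∀ ω, ζ 0 ω = true)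
    (hζ : ∀ n : ℕ, 0 < n → ∀ ω,
      (ζ n ω = true ↔ ∃ m < n, ζ m ω = true ∧ n - m ≤ R n ω)) :
    P {ω | {n : ℕ | ζ n ω = true}.Infinite} = 1 := by
  have hlaw : ∀ i k, P (R i ⁻¹' Set.Iic k) = α k := fun i k => by
    rw [← hα k]
    exact (IdentDistrib.mk (hmeas i).aemeasurable (hmeas 0).aemeasurable
      (hident i)).measure_mem_eq measurableSet_Iic
  have hstuck : ∀ M, P (⋂ k, R (M + k + 1) ⁻¹' Set.Iic k) = 0 := fun M =>
    have hshift : iIndepFun (fun k => R (M + k + 1)) P :=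
      hindep.precomp fun a b h => by omega
    hshift.measure_iInter_preimage_eq_zero (fun _ => measurableSet_Iic)
      (by simpa only [hlaw] using hprod0)
  have hfinite : P {ω | {n | ζ n ω = true}.Finite} = 0 := by
    refine measure_mono_null (fun ω hω => ?_) (measure_iUnion_null hstuck)
    obtain ⟨M, hM⟩ := exists_forall_radius_le_of_finite (hζ0 ω)
      (fun n m hmn hm hr => (hζ n (by omega) ω).2 ⟨m, hmn, hm, hr⟩) hω
    exact Set.mem_iUnion.2 ⟨M, Set.mem_iInter.2 hM⟩
  have := (prob_compl_eq_one_iff₀ (NullMeasurableSet.of_null hfinite)).2 hfinite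
  simpa only [Set.compl_ofPred, Set.not_finite] using this

/-- in the Reverse Firework process, if `∏_{k≥0} α_k = 0`
then the rumor survives almost surely: `P(N = ∞) = 1`. -/
theorem rumor_stmt_10 {Ω : Type*} [MeasurableSpace Ω] (P : Measure Ω) [IsProbabilityMeasure P]
    (R : ℕ → Ω → ℕ) (hmeas : ∀ i, Measurable (R i))
    (hindep : iIndepFun R P)
    (hident : ∀ i, Measure.map (R i) P = Measure.map (R 0) P)
    (α : ℕ → ℝ≥0∞) (hα : ∀ k, P {ω | R 0 ω ≤ k} = α k)
    (hle1 : ∀ k, α k ≤ 1) (hα0 : 0 < α 0 ∧ α 0 < 1)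
    (hprod0 : Tendsto (fun n => ∏ i ∈ Finset.range n, α i) atTop (nhds 0))
    (ζ : ℕ → Ω → Bool)
    (hζ0 : ∀ ω, ζ 0 ω = true)
    (hζ : ∀ n : ℕ, 0 < n → ∀ ω,
      (ζ n ω = true ↔ ∃ m < n, ζ m ω = true ∧ n - m ≤ R n ω)) :
    P {ω | {n : ℕ | ζ n ω = true}.Infinite} = 1 :=
  rumor_stmt_10_general P R hmeas hindep hident α hα hprod0 ζ hζ0 hζ
end

section
/- In the Reverse Firework process on ℕ, if r := ∏_{k≥0} α_k > 0, then the rumor dies out almost surely and the final number N of spreaders has geometric distribution with parameter r: P(N = m) = (1-r)^{m-1} r for m ≥ 1. -/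
/-!
Whether site `t` is the informed site preceded by exactly `m` informed sites depends only on the
radii `R 1, …, R t`. Given that `t` is informed, no later site is ever informed iff
`R (t + 1 + i) ≤ i` for every `i`, an event depending only on the radii beyond `t`, of
probability `∏ α_i = r`. By independence, each informed site is the last one with probability
`r` whatever happened before it, so `P(N > m) = (1 - r)^m` and `P(N = m + 1) = (1 - r)^m r`;
since `r > 0`, `P(N = ∞) ≤ (1 - r)^m → 0`.
-/

open MeasureTheory ProbabilityTheory Filter Finset Function
open scoped ENNReal

namespace Nat

variable {p : ℕ → Prop} [DecidablePred p]

theorem count_le_encard (n : ℕ) : (count p n : ℕ∞) ≤ {k | p k}.encard := by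
  rw [count_eq_card_filter_range, ← Set.encard_coe_eq_coe_finsetCard]
  exact Set.encard_le_encard fun k hk => (Finset.mem_filter.1 hk).2

theorem count_lt_encard {t : ℕ} (ht : p t) : (count p t : ℕ∞) < {k | p k}.encard := by
  have h := count_le_encard (p := p) (t + 1)
  rw [count_succ_eq_succ_count_iff.2 ht, Nat.cast_succ] at h
  exact ENat.add_one_le_iff (ENat.natCast_ne_top _) |>.1 h

theorem coe_lt_encard_iff_exists_count_eq (m : ℕ) :
    (m : ℕ∞) < {k | p k}.encard ↔ ∃ t, p t ∧ count p t = m := by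
  refine ⟨fun hm => ?_, fun ⟨t, ht, hcount⟩ => hcount ▸ count_lt_encard ht⟩
  have hfin : ∀ hf : (Set.ofPred p).Finite, m < #hf.toFinset := fun hf => by
    rwa [hf.encard_eq_coe_toFinset_card, Nat.cast_lt] at hm
  exact ⟨nth p m, nth_mem m hfin, count_nth hfin⟩

theorem count_add_one_lt_encard_iff {t : ℕ} (ht : p t) :
    (count p t + 1 : ℕ∞) < {k | p k}.encard ↔ ∃ n > t, p n := by
  constructor
  · intro h
    by_contra! hnone
    have hsub : {k | p k} ⊆ ↑({k ∈ range (t + 1) | p k}) := fun k hk => by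
      have : k ≤ t := by by_contra! hlt; exact hnone k hlt hk
      simpa [Nat.lt_succ_iff, this] using hk
    have := Set.encard_le_encard hsub
    rw [Set.encard_coe_eq_coe_finsetCard, ← count_eq_card_filter_range,
      count_succ_eq_succ_count_iff.2 ht, Nat.cast_succ] at this
    exact h.not_ge this
  · rintro ⟨n, hnt, hn⟩
    have h := count_lt_encard hn
    have := count_strict_mono ht hnt
    exact lt_of_le_of_lt (by exact_mod_cast this) h

end Nat

theorem MeasureTheory.measure_iUnion_inter_eq_mul {Ω ι : Type*} [MeasurableSpace Ω] [Countable ι]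
    {P : Measure Ω} {F : ι → Set Ω}
    (hdisj : Pairwise (Disjoint on F)) (hF : ∀ t, MeasurableSet (F t)) {G : Set Ω}
    (hG : MeasurableSet G) {c : ℝ≥0∞} (h : ∀ t, P (F t ∩ G) = P (F t) * c) :
    P ((⋃ t, F t) ∩ G) = P (⋃ t, F t) * c := by
  have hdisjG : Pairwise (Disjoint on fun t => F t ∩ G) := fun _ _ hne =>
    (hdisj hne).mono Set.inter_subset_left Set.inter_subset_left
  rw [Set.iUnion_inter, measure_iUnion hdisjG fun t => (hF t).inter hG, measure_iUnion hdisj hF,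
    tsum_congr h, ENNReal.tsum_mul_right]

namespace ReverseFirework

theorem exists_gt_informed_iff {z : ℕ → Bool} {ρ : ℕ → ℕ}
    (hz : ∀ n, 0 < n → (z n = true ↔ ∃ m < n, z m = true ∧ n - m ≤ ρ n))
    {t : ℕ} (ht : z t = true) :
    (∃ n > t, z n = true) ↔ ∃ i, i < ρ (t + 1 + i) := by
  classical
  constructor
  · intro h
    obtain ⟨hnt, hn⟩ := Nat.find_spec h
    obtain ⟨m, hmn, hm, hreach⟩ := (hz _ (by omega)).1 hn
    -- the first informed site after `t` can only be reached from a site `≤ t`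
    have hmt : m ≤ t := by
      by_contra! hlt
      exact Nat.find_min h hmn ⟨hlt, hm⟩
    obtain ⟨i, hi⟩ : ∃ i, Nat.find h = t + 1 + i := ⟨Nat.find h - t - 1, by omega⟩
    exact ⟨i, by rw [← hi]; omega⟩
  · rintro ⟨i, hi⟩
    exact ⟨t + 1 + i, by omega, (hz _ (by omega)).2 ⟨t, by omega, ht, by omega⟩⟩

variable {Ω : Type*}

structure IsReverseFirework (R : ℕ → Ω → ℕ) (ζ : ℕ → Ω → Bool) : Prop where
  zero : ∀ ω, ζ 0 ω = true
  informed_iff : ∀ n, 0 < n → ∀ ω, (ζ n ω = true ↔ ∃ m < n, ζ m ω = true ∧ n - m ≤ R n ω)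

structure IIDRadii [MeasurableSpace Ω] (P : Measure Ω) (R : ℕ → Ω → ℕ) (α : ℕ → ℝ≥0∞) : Prop where
  measurable : ∀ i, Measurable (R i)
  indep : iIndepFun R P
  identDistrib : ∀ i, Measure.map (R i) P = Measure.map (R 0) P
  cdf : ∀ k, P {ω | R 0 ω ≤ k} = α k

abbrev sigmaOn (R : ℕ → Ω → ℕ) (s : Set ℕ) : MeasurableSpace Ω :=
  ⨆ i ∈ s, MeasurableSpace.comap (R i) inferInstance

def deadAfter (R : ℕ → Ω → ℕ) (t : ℕ) : Set Ω := {ω | ∀ i, R (t + 1 + i) ω ≤ i}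

def moreThan (ζ : ℕ → Ω → Bool) (m : ℕ) : Set Ω := {ω | (m : ℕ∞) < {n | ζ n ω = true}.encard}

-- `t` is the informed site of index `m`, counting from `0`
def informedAt (ζ : ℕ → Ω → Bool) (m t : ℕ) : Set Ω :=
  {ω | ζ t ω = true ∧ Nat.count (fun n => ζ n ω = true) t = m}

variable {R : ℕ → Ω → ℕ} {ζ : ℕ → Ω → Bool}

section SigmaAlgebras

theorem comap_le_sigmaOn {s : Set ℕ} {i : ℕ} (hi : i ∈ s) :
    MeasurableSpace.comap (R i) inferInstance ≤ sigmaOn R s :=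
  le_iSup₂ (f := fun i (_ : i ∈ s) => MeasurableSpace.comap (R i) inferInstance) i hi

theorem sigmaOn_mono {s s' : Set ℕ} (h : s ⊆ s') : sigmaOn R s ≤ sigmaOn R s' :=
  iSup₂_le fun _ hi => comap_le_sigmaOn (h hi)

theorem measurableSet_sigmaOn_preimage {s : Set ℕ} {i : ℕ} (hi : i ∈ s) (A : Set ℕ) :
    MeasurableSet[sigmaOn R s] (R i ⁻¹' A) :=
  comap_le_sigmaOn hi _ ⟨A, trivial, rfl⟩

theorem measurableSet_informed (hζ : IsReverseFirework R ζ) (n : ℕ) :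
    MeasurableSet[sigmaOn R (Set.Iic n)] {ω | ζ n ω = true} := by
  induction n using Nat.strong_induction_on with
  | _ n ih =>
  rcases Nat.eq_zero_or_pos n with rfl | hn
  · simp [hζ.zero]
  have : {ω | ζ n ω = true} = ⋃ m < n, {ω | ζ m ω = true} ∩ R n ⁻¹' {x | n - m ≤ x} := by
    ext ω
    simp only [Set.mem_ofPred_eq, Set.mem_iUnion, Set.mem_inter_iff, Set.mem_preimage, exists_prop,
      hζ.informed_iff n hn ω]
  rw [this]
  refine MeasurableSet.biUnion (m := sigmaOn R (Set.Iic n)) (Set.to_countable _) fun m hm => ?_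
  refine MeasurableSet.inter ?_ ?_
  · exact sigmaOn_mono (Set.Iic_subset_Iic.2 (le_of_lt hm)) _ (ih m hm)
  · exact measurableSet_sigmaOn_preimage (s := Set.Iic n) Set.self_mem_Iic _

theorem measurable_count {m : MeasurableSpace Ω} (t : ℕ)
    (h : ∀ n < t, MeasurableSet[m] {ω | ζ n ω = true}) :
    Measurable[m] fun ω => Nat.count (fun n => ζ n ω = true) t := by
  induction t with
  | zero => simp only [Nat.count_zero]; exact measurable_const
  | succ t ih =>
    simp only [Nat.count_succ]
    have h1 := ih fun n hn => h n (by omega)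
    have h2 : Measurable[m] fun ω => if ζ t ω = true then 1 else 0 :=
      Measurable.ite (h t (by omega)) measurable_const measurable_const
    exact h1.add h2

theorem measurableSet_informedAt (hζ : IsReverseFirework R ζ) (m t : ℕ) :
    MeasurableSet[sigmaOn R (Set.Iic t)] (informedAt ζ m t) := by
  have hinf : ∀ n ≤ t, MeasurableSet[sigmaOn R (Set.Iic t)] {ω | ζ n ω = true} := fun n hn =>
    sigmaOn_mono (Set.Iic_subset_Iic.2 hn) _ (measurableSet_informed hζ n)
  exact (hinf t le_rfl).inter
    ((measurable_count t fun n hn => hinf n hn.le) (measurableSet_singleton m))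

theorem measurableSet_deadAfter (t : ℕ) : MeasurableSet[sigmaOn R (Set.Ioi t)] (deadAfter R t) := by
  have : deadAfter R t = ⋂ i, R (t + 1 + i) ⁻¹' Set.Iic i := by ext; simp [deadAfter]
  rw [this]
  exact MeasurableSet.iInter fun i =>
    measurableSet_sigmaOn_preimage (s := Set.Ioi t) (Set.mem_Ioi.2 (by omega)) _

end SigmaAlgebras

section Counting

theorem moreThan_eq_iUnion_informedAt (m : ℕ) : moreThan ζ m = ⋃ t, informedAt ζ m t := by
  ext ω
  simp only [moreThan, informedAt, Set.mem_iUnion, Set.mem_ofPred_eq]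
  exact Nat.coe_lt_encard_iff_exists_count_eq m

theorem pairwise_disjoint_informedAt (m : ℕ) : Pairwise (Disjoint on informedAt ζ m) :=
  fun _ _ hne => Set.disjoint_left.2 fun _ ⟨ht, hc⟩ ⟨ht', hc'⟩ =>
    hne (Nat.count_injective ht ht' (hc.trans hc'.symm))

theorem mem_moreThan_succ_iff (hζ : IsReverseFirework R ζ) {m t : ℕ} {ω : Ω}
    (hω : ω ∈ informedAt ζ m t) : ω ∈ moreThan ζ (m + 1) ↔ ω ∉ deadAfter R t := by
  obtain ⟨ht, rfl⟩ := hω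
  simp only [moreThan, deadAfter, Set.mem_ofPred_eq, not_forall, not_le, Nat.cast_succ]
  rw [Nat.count_add_one_lt_encard_iff ht]
  exact exists_gt_informed_iff (fun n hn => hζ.informed_iff n hn ω) ht

theorem moreThan_zero (hζ : IsReverseFirework R ζ) : moreThan ζ 0 = Set.univ :=
  Set.eq_univ_of_forall fun ω => by
    simpa [moreThan, Set.encard_pos] using ⟨0, hζ.zero ω⟩

theorem moreThan_succ_subset (m : ℕ) : moreThan ζ (m + 1) ⊆ moreThan ζ m :=
  fun _ h => lt_of_le_of_lt (by simp : (m : ℕ∞) ≤ (m + 1 : ℕ)) h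

theorem setOf_infinite_subset_moreThan (m : ℕ) :
    {ω | {n | ζ n ω = true}.Infinite} ⊆ moreThan ζ m := fun ω h => by
  simp only [moreThan, Set.mem_ofPred_eq, h.encard_eq, ENat.natCast_lt_top]

theorem setOf_ncard_eq_succ (m : ℕ) :
    {ω | {n | ζ n ω = true}.ncard = m + 1} = moreThan ζ m ∩ (moreThan ζ (m + 1))ᶜ := by
  ext ω
  simp only [moreThan, Set.mem_ofPred_eq, Set.mem_inter_iff, Set.mem_compl_iff, Set.ncard_def,
    ENat.toNat_eq_iff m.succ_ne_zero]
  induction {n | ζ n ω = true}.encard using ENat.recTopCoe with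
  | top => simpa using ENat.top_ne_natCast (m + 1)
  | coe k => norm_cast; omega

end Counting

section Probability

variable [MeasurableSpace Ω] {P : Measure Ω} {α : ℕ → ℝ≥0∞}

theorem IIDRadii.sigmaOn_le (hR : IIDRadii P R α) (s : Set ℕ) :
    sigmaOn R s ≤ ‹MeasurableSpace Ω› :=
  iSup₂_le fun i _ => (hR.measurable i).comap_le

theorem IIDRadii.indep_sigmaOn (hR : IIDRadii P R α) {s s' : Set ℕ} (h : Disjoint s s') :
    Indep (sigmaOn R s) (sigmaOn R s') P :=
  indep_iSup_of_disjoint (fun i => (hR.measurable i).comap_le)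
    ((iIndepFun_iff_iIndep _ _ _).1 hR.indep) h

theorem IIDRadii.measure_le (hR : IIDRadii P R α) (n k : ℕ) : P (R n ⁻¹' Set.Iic k) = α k := by
  rw [← Measure.map_apply (hR.measurable n) .of_discrete, hR.identDistrib,
    Measure.map_apply (hR.measurable 0) .of_discrete]
  exact hR.cdf k

theorem measurableSet_moreThan (hζ : IsReverseFirework R ζ) (hR : IIDRadii P R α) (m : ℕ) :
    MeasurableSet (moreThan ζ m) := by
  rw [moreThan_eq_iUnion_informedAt]
  exact .iUnion fun t => hR.sigmaOn_le _ _ (measurableSet_informedAt hζ m t)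

variable [IsProbabilityMeasure P] {r : ℝ≥0∞}

theorem IIDRadii.measure_deadAfter (hR : IIDRadii P R α)
    (hprod : Tendsto (fun n => ∏ i ∈ Finset.range n, α i) atTop (nhds r)) (t : ℕ) :
    P (deadAfter R t) = r := by
  set D : ℕ → Set Ω := fun K => ⋂ i ∈ Finset.range K, R (t + 1 + i) ⁻¹' Set.Iic i
  have hD : ∀ K, P (D K) = ∏ i ∈ Finset.range K, α i := fun K => by
    have hshift : iIndepFun (fun i => R (t + 1 + i)) P :=
      hR.indep.precomp fun _ _ h => by simpa using h
    rw [hshift.measure_inter_preimage_eq_mul (Finset.range K) fun _ _ => .of_discrete]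
    exact Finset.prod_congr rfl fun i _ => hR.measure_le _ i
  have hlim := tendsto_measure_iInter_atTop (μ := P) (s := D)
    (fun K => (MeasurableSet.biInter (Finset.countable_toSet _) fun i _ =>
      hR.measurable _ .of_discrete).nullMeasurableSet)
    (fun K L hKL => Set.biInter_subset_biInter_left (by simpa using hKL)) ⟨0, measure_ne_top P _⟩
  have hinter : ⋂ K, D K = deadAfter R t := by
    ext ω
    simp only [D, deadAfter, Set.mem_iInter, Finset.mem_range, Set.mem_preimage, Set.mem_Iic]
    exact ⟨fun h i => h (i + 1) i (by omega), fun h _ i _ => h i⟩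
  rw [hinter] at hlim
  exact tendsto_nhds_unique hlim (by simpa only [comp_def, hD] using hprod)

variable {t : ℕ} {F : Set Ω}

theorem IIDRadii.measure_inter_deadAfter (hR : IIDRadii P R α)
    (hprod : Tendsto (fun n => ∏ i ∈ Finset.range n, α i) atTop (nhds r))
    (hF : MeasurableSet[sigmaOn R (Set.Iic t)] F) : P (F ∩ deadAfter R t) = P F * r := by
  rw [(Indep_iff _ _ _).1 (hR.indep_sigmaOn (Set.Iic_disjoint_Ioi le_rfl)) _ _ hF
    (measurableSet_deadAfter t), hR.measure_deadAfter hprod]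

theorem IIDRadii.measure_inter_compl_deadAfter (hR : IIDRadii P R α)
    (hprod : Tendsto (fun n => ∏ i ∈ Finset.range n, α i) atTop (nhds r))
    (hF : MeasurableSet[sigmaOn R (Set.Iic t)] F) : P (F ∩ (deadAfter R t)ᶜ) = P F * (1 - r) := by
  rw [(Indep_iff _ _ _).1 (hR.indep_sigmaOn (Set.Iic_disjoint_Ioi le_rfl)) _ _ hF
    (measurableSet_deadAfter t).compl,
    prob_compl_eq_one_sub (hR.sigmaOn_le _ _ (measurableSet_deadAfter t)),
    hR.measure_deadAfter hprod]

theorem measure_moreThan_succ (hζ : IsReverseFirework R ζ) (hR : IIDRadii P R α)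
    (hprod : Tendsto (fun n => ∏ i ∈ Finset.range n, α i) atTop (nhds r)) (m : ℕ) :
    P (moreThan ζ (m + 1)) = P (moreThan ζ m) * (1 - r) := by
  calc P (moreThan ζ (m + 1)) = P ((⋃ t, informedAt ζ m t) ∩ moreThan ζ (m + 1)) := by
        rw [← moreThan_eq_iUnion_informedAt, Set.inter_eq_right.2 (moreThan_succ_subset m)]
    _ = P (moreThan ζ m) * (1 - r) := by
      rw [moreThan_eq_iUnion_informedAt m]
      refine measure_iUnion_inter_eq_mul (pairwise_disjoint_informedAt m)
        (fun t => hR.sigmaOn_le _ _ (measurableSet_informedAt hζ m t))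
        (measurableSet_moreThan hζ hR _) fun t => ?_
      have : informedAt ζ m t ∩ moreThan ζ (m + 1) = informedAt ζ m t ∩ (deadAfter R t)ᶜ :=
        Set.ext fun ω => and_congr_right (mem_moreThan_succ_iff hζ)
      rw [this, hR.measure_inter_compl_deadAfter hprod (measurableSet_informedAt hζ m t)]

theorem measure_ncard_eq_succ (hζ : IsReverseFirework R ζ) (hR : IIDRadii P R α)
    (hprod : Tendsto (fun n => ∏ i ∈ Finset.range n, α i) atTop (nhds r)) (m : ℕ) :
    P {ω | {n | ζ n ω = true}.ncard = m + 1} = P (moreThan ζ m) * r := by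
  rw [setOf_ncard_eq_succ, moreThan_eq_iUnion_informedAt m]
  refine measure_iUnion_inter_eq_mul (pairwise_disjoint_informedAt m)
    (fun t => hR.sigmaOn_le _ _ (measurableSet_informedAt hζ m t))
    (measurableSet_moreThan hζ hR _).compl fun t => ?_
  have : informedAt ζ m t ∩ (moreThan ζ (m + 1))ᶜ = informedAt ζ m t ∩ deadAfter R t :=
    Set.ext fun _ => and_congr_right fun hω => (mem_moreThan_succ_iff hζ hω).not_left
  rw [this, hR.measure_inter_deadAfter hprod (measurableSet_informedAt hζ m t)]

end Probability

end ReverseFirework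

theorem rumor_stmt_11_general {Ω : Type*} [MeasurableSpace Ω] (P : Measure Ω) [IsProbabilityMeasure P]
    (R : ℕ → Ω → ℕ) (hmeas : ∀ i, Measurable (R i))
    (hindep : iIndepFun R P)
    (hident : ∀ i, Measure.map (R i) P = Measure.map (R 0) P)
    (α : ℕ → ℝ≥0∞) (hα : ∀ k, P {ω | R 0 ω ≤ k} = α k)
    (r : ℝ≥0∞) (hrpos : 0 < r)
    (hprod : Tendsto (fun n => ∏ i ∈ Finset.range n, α i) atTop (nhds r))
    (ζ : ℕ → Ω → Bool)
    (hζ0 : ∀ ω, ζ 0 ω = true)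
    (hζ : ∀ n : ℕ, 0 < n → ∀ ω,
      (ζ n ω = true ↔ ∃ m < n, ζ m ω = true ∧ n - m ≤ R n ω)) :
    P {ω | {n : ℕ | ζ n ω = true}.Infinite} = 0 ∧
      ∀ m : ℕ, 1 ≤ m →
        P {ω | ({n : ℕ | ζ n ω = true}).ncard = m} = (1 - r) ^ (m - 1) * r := by
  have hfire : ReverseFirework.IsReverseFirework R ζ := ⟨hζ0, hζ⟩
  have hR : ReverseFirework.IIDRadii P R α := ⟨hmeas, hindep, hident, hα⟩
  have hmore : ∀ m, P (ReverseFirework.moreThan ζ m) = (1 - r) ^ m := by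
    intro m
    induction m with
    | zero => rw [ReverseFirework.moreThan_zero hfire, measure_univ, pow_zero]
    | succ m ih => rw [ReverseFirework.measure_moreThan_succ hfire hR hprod, ih, pow_succ]
  refine ⟨?_, fun m hm => ?_⟩
  · have hlt : 1 - r < 1 := ENNReal.sub_lt_self ENNReal.one_ne_top one_ne_zero hrpos.ne'
    refine le_antisymm (ge_of_tendsto' (ENNReal.tendsto_pow_atTop_nhds_zero_of_lt_one hlt)
      fun m => ?_) zero_le
    exact (measure_mono (ReverseFirework.setOf_infinite_subset_moreThan m)).trans_eq (hmore m)
  · obtain ⟨k, rfl⟩ := Nat.exists_eq_add_of_le' hm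
    rw [ReverseFirework.measure_ncard_eq_succ hfire hR hprod, hmore, Nat.add_sub_cancel]

/-- in the Reverse Firework process, if `r := ∏_{k≥0} α_k > 0`, the rumor
dies out almost surely and the final number of spreaders `N` is geometric with parameter
`r`: `P(N = m) = (1-r)^{m-1} r` for `m ≥ 1`. -/
theorem rumor_stmt_11 {Ω : Type*} [MeasurableSpace Ω] (P : Measure Ω) [IsProbabilityMeasure P]
    (R : ℕ → Ω → ℕ) (hmeas : ∀ i, Measurable (R i))
    (hindep : iIndepFun R P)
    (hident : ∀ i, Measure.map (R i) P = Measure.map (R 0) P)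
    (α : ℕ → ℝ≥0∞) (hα : ∀ k, P {ω | R 0 ω ≤ k} = α k)
    (hle1 : ∀ k, α k ≤ 1) (hα0 : 0 < α 0 ∧ α 0 < 1)
    (r : ℝ≥0∞) (hrpos : 0 < r)
    (hprod : Tendsto (fun n => ∏ i ∈ Finset.range n, α i) atTop (nhds r))
    (ζ : ℕ → Ω → Bool)
    (hζ0 : ∀ ω, ζ 0 ω = true)
    (hζ : ∀ n : ℕ, 0 < n → ∀ ω,
      (ζ n ω = true ↔ ∃ m < n, ζ m ω = true ∧ n - m ≤ R n ω)) :
    P {ω | {n : ℕ | ζ n ω = true}.Infinite} = 0 ∧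
      ∀ m : ℕ, 1 ≤ m →
        P {ω | ({n : ℕ | ζ n ω = true}).ncard = m} = (1 - r) ^ (m - 1) * r :=
  rumor_stmt_11_general P R hmeas hindep hident α hα r hrpos hprod ζ hζ0 hζ
end

section
/- The process (ζ_n)_{n≥0} of eventual-spreader indicators of the Reverse Firework process has the law of the discrete renewal process with inter-arrival distribution q_k = (1-α_{k-1})·∏_{i=0}^{k-2} α_i: conditionally on ζ_0^{n-1} = a_0^{n-1} with a_0 = 1, P(ζ_n = 1 | ζ_0^{n-1} = a_0^{n-1}) = 1 - α_{ℓ(a_0^{n-1})}, where ℓ(a_0^{n-1}) is the number of zeros after the last 1 in a_0^{n-1}. -/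
/-!
Since `ζ_n = 1` exactly when some earlier spreader `m < n` reaches `n`, i.e. `n - m ≤ R_n`, on
the event `ζ_0^{n-1} = a_0^{n-1}` the condition `ζ_n = 1` is `ℓ(a_0^{n-1}) < R_n`: the last
spreader is the closest one. The event `ζ_0^{n-1} = a_0^{n-1}` is determined by `R_1, …, R_{n-1}`,
hence independent of `R_n`, and `P(ℓ < R_n) = 1 - α_ℓ`.
-/

open MeasureTheory ProbabilityTheory
open scoped ENNReal

theorem ProbabilityTheory.iIndepFun.indep_comap_natural_of_lt' {Ω ι β : Type*} [MeasurableSpace Ω]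
    {μ : Measure Ω} [LinearOrder ι] [TopologicalSpace β] [TopologicalSpace.MetrizableSpace β]
    [mβ : MeasurableSpace β] [BorelSpace β] {f : ι → Ω → β} (hf : ∀ i, StronglyMeasurable (f i))
    (hfi : iIndepFun f μ) {i j : ι} (hij : i < j) :
    Indep (MeasurableSpace.comap (f j) mβ) (Filtration.natural f hf i) μ := by
  suffices Indep (⨆ k ∈ ({j} : Set ι), MeasurableSpace.comap (f k) mβ)
      (⨆ k ∈ {k | k ≤ i}, MeasurableSpace.comap (f k) mβ) μ by rwa [iSup_singleton] at this
  exact indep_iSup_of_disjoint (fun k => (hf k).measurable.comap_le) hfi (by simpa)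

lemma measure_lt_eq_one_sub_of_map_eq {Ω : Type*} [MeasurableSpace Ω] {P : Measure Ω}
    [IsProbabilityMeasure P] {X Y : Ω → ℕ} (hX : Measurable X) (hY : Measurable Y)
    (hXY : P.map X = P.map Y) (k : ℕ) :
    P {ω | k < X ω} = 1 - P {ω | Y ω ≤ k} := by
  have hident : IdentDistrib X Y P P := ⟨hX.aemeasurable, hY.aemeasurable, hXY⟩
  calc P {ω | k < X ω} = P (X ⁻¹' Set.Iic k)ᶜ := by congr 1; ext ω; simp
    _ = 1 - P {ω | Y ω ≤ k} := by
      rw [prob_compl_eq_one_sub (hX measurableSet_Iic), hident.measure_mem_eq measurableSet_Iic]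
      rfl

/-- The number `ℓ(a_0^{n-1})` of `false` entries after the last `true` one in `a_0, …, a_{n-1}`. -/
noncomputable def trailingFalseCount (a : ℕ → Bool) (n : ℕ) : ℕ :=
  sInf {i : ℕ | a (n - 1 - i) = true}

lemma exists_true_within_iff {a : ℕ → Bool} {n r : ℕ} (ha0 : a 0 = true) (hn : 0 < n) :
    (∃ m < n, a m = true ∧ n - m ≤ r) ↔ trailingFalseCount a n < r := by
  have hmem : n - 1 ∈ {i : ℕ | a (n - 1 - i) = true} := by simpa using ha0
  have hle : trailingFalseCount a n ≤ n - 1 := Nat.sInf_le hmem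
  constructor
  · rintro ⟨m, hm, ham, hmr⟩
    have : trailingFalseCount a n ≤ n - 1 - m :=
      Nat.sInf_le (by simpa [show n - 1 - (n - 1 - m) = m by omega] using ham)
    omega
  · intro hr
    exact ⟨n - 1 - trailingFalseCount a n, by omega, Nat.sInf_mem ⟨_, hmem⟩, by omega⟩

section Renewal

variable {Ω : Type*} {R : ℕ → Ω → ℕ} {ζ : ℕ → Ω → Bool}

lemma setOf_prefix_inter_eq
    (hζ : ∀ n : ℕ, 0 < n → ∀ ω, (ζ n ω = true ↔ ∃ m < n, ζ m ω = true ∧ n - m ≤ R n ω))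
    {n : ℕ} (hn : 0 < n) {a : ℕ → Bool} (ha0 : a 0 = true) :
    {ω | ∀ i < n, ζ i ω = a i} ∩ {ω | ζ n ω = true} =
      {ω | ∀ i < n, ζ i ω = a i} ∩ {ω | trailingFalseCount a n < R n ω} := by
  ext ω
  simp only [Set.mem_inter_iff, Set.mem_ofPred_eq, and_congr_right_iff]
  intro hprefix
  rw [hζ n hn ω, ← exists_true_within_iff ha0 hn]
  exact exists_congr fun m => and_congr_right fun hm => by rw [hprefix m hm]

variable [MeasurableSpace Ω]

lemma adapted_natural_of_recursion (hR : ∀ i, StronglyMeasurable (R i))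
    (hζ0 : ∀ ω, ζ 0 ω = true)
    (hζ : ∀ n : ℕ, 0 < n → ∀ ω, (ζ n ω = true ↔ ∃ m < n, ζ m ω = true ∧ n - m ≤ R n ω)) :
    Adapted (Filtration.natural R hR) ζ := by
  intro n
  induction n using Nat.strong_induction_on with
  | _ n ih =>
    refine measurable_to_bool ?_
    rcases Nat.eq_zero_or_pos n with rfl | hn
    · simp [Set.preimage, hζ0]
    have hunion : ζ n ⁻¹' {true} = ⋃ m ∈ Finset.range n, ζ m ⁻¹' {true} ∩ {ω | n - m ≤ R n ω} := by
      ext ω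
      simp only [Set.mem_preimage, Set.mem_singleton_iff, Set.mem_iUnion, Set.mem_inter_iff,
        Set.mem_ofPred_eq, Finset.mem_range, exists_prop, hζ n hn ω]
    rw [hunion]
    refine MeasurableSet.biUnion (Finset.range n).countable_toSet fun m hm => ?_
    have hmn : m ≤ n := (Finset.mem_range.1 hm).le
    exact .inter (Filtration.mono _ hmn _ (ih m (Finset.mem_range.1 hm) (by simp)))
      (measurableSet_le measurable_const (Filtration.stronglyAdapted_natural hR n).measurable)

lemma measurableSet_natural_setOf_prefix (hR : ∀ i, StronglyMeasurable (R i))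
    (hζ : Adapted (Filtration.natural R hR) ζ) (n : ℕ) (a : ℕ → Bool) :
    MeasurableSet[Filtration.natural R hR (n - 1)] {ω | ∀ i < n, ζ i ω = a i} := by
  have hinter : {ω | ∀ i < n, ζ i ω = a i} = ⋂ i ∈ Finset.range n, ζ i ⁻¹' {a i} := by
    ext ω
    simp
  rw [hinter]
  refine MeasurableSet.biInter (Finset.range n).countable_toSet fun i hi => ?_
  have hin : i ≤ n - 1 := by have := Finset.mem_range.1 hi; omega
  exact Filtration.mono _ hin _ (hζ i (by simp))

end Renewal

theorem rumor_stmt_12_general {Ω : Type*} [MeasurableSpace Ω] (P : Measure Ω) [IsProbabilityMeasure P]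
    (R : ℕ → Ω → ℕ) (hmeas : ∀ i, Measurable (R i))
    (hindep : iIndepFun R P)
    (hident : ∀ i, Measure.map (R i) P = Measure.map (R 0) P)
    (α : ℕ → ℝ≥0∞) (hα : ∀ k, P {ω | R 0 ω ≤ k} = α k)
    (ζ : ℕ → Ω → Bool)
    (hζ0 : ∀ ω, ζ 0 ω = true)
    (hζ : ∀ n : ℕ, 0 < n → ∀ ω,
      (ζ n ω = true ↔ ∃ m < n, ζ m ω = true ∧ n - m ≤ R n ω)) :
    ∀ (n : ℕ), 1 ≤ n → ∀ (a : ℕ → Bool), a 0 = true →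
      P ({ω | ∀ i < n, ζ i ω = a i} ∩ {ω | ζ n ω = true}) =
        (1 - α (sInf {i : ℕ | a (n - 1 - i) = true})) *
          P {ω | ∀ i < n, ζ i ω = a i} := by
  intro n hn a ha0
  have hR : ∀ i, StronglyMeasurable (R i) := fun i => (hmeas i).stronglyMeasurable
  change _ = (1 - α (trailingFalseCount a n)) * _
  set ℓ := trailingFalseCount a n
  have hpast := measurableSet_natural_setOf_prefix hR (adapted_natural_of_recursion hR hζ0 hζ) n a
  have hfuture : MeasurableSet[MeasurableSpace.comap (R n) inferInstance] {ω | ℓ < R n ω} :=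
    ⟨{k | ℓ < k}, trivial, rfl⟩
  rw [setOf_prefix_inter_eq hζ hn ha0, mul_comm,
    ((hindep.indep_comap_natural_of_lt' hR (by omega : n - 1 < n)).symm.indepSet_of_measurableSet
      hpast hfuture).measure_inter_eq_mul,
    measure_lt_eq_one_sub_of_map_eq (hmeas n) (hmeas 0) (hident n), hα]

/-- the eventual-spreader indicators `(ζ_n)` of the Reverse Firework process
form a discrete renewal process: conditionally on `ζ_0^{n-1} = a_0^{n-1}` (with `a_0 = 1`),
`P(ζ_n = 1 | ζ_0^{n-1} = a_0^{n-1}) = 1 - α_{ℓ(a_0^{n-1})}`, where `ℓ(a_0^{n-1})` is the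
number of zeros after the last `1` in `a_0^{n-1}`.  The conditional probability is stated in
multiplicative form. -/
theorem rumor_stmt_12 {Ω : Type*} [MeasurableSpace Ω] (P : Measure Ω) [IsProbabilityMeasure P]
    (R : ℕ → Ω → ℕ) (hmeas : ∀ i, Measurable (R i))
    (hindep : iIndepFun R P)
    (hident : ∀ i, Measure.map (R i) P = Measure.map (R 0) P)
    (α : ℕ → ℝ≥0∞) (hα : ∀ k, P {ω | R 0 ω ≤ k} = α k)
    (hle1 : ∀ k, α k ≤ 1) (hα0 : 0 < α 0 ∧ α 0 < 1)
    (ζ : ℕ → Ω → Bool)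
    (hζ0 : ∀ ω, ζ 0 ω = true)
    (hζ : ∀ n : ℕ, 0 < n → ∀ ω,
      (ζ n ω = true ↔ ∃ m < n, ζ m ω = true ∧ n - m ≤ R n ω)) :
    ∀ (n : ℕ), 1 ≤ n → ∀ (a : ℕ → Bool), a 0 = true →
      P ({ω | ∀ i < n, ζ i ω = a i} ∩ {ω | ζ n ω = true}) =
        (1 - α (sInf {i : ℕ | a (n - 1 - i) = true})) *
          P {ω | ∀ i < n, ζ i ω = a i} :=
  rumor_stmt_12_general P R hmeas hindep hident α hα ζ hζ0 hζ
end

section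
/- Law of large numbers for the Reverse Firework process: if μ := 1 + ∑_{j≥1} ∏_{i=0}^{j-1} α_i < ∞, then N(n)/n → 1/μ almost surely, where N(n) = ∑_{i=1}^n ζ_i is the number of spreaders among sites 1,...,n. -/
/-!
The informed sites form a renewal process: from an informed site `p` the next one is `p + j` for
the first `j ≥ 1` with `R (p + j) ≥ j`. Successive gaps are read off disjoint blocks of the i.i.d.
radii, so they are i.i.d. with `P(gap > n) = ∏_{i<n} α_i`, hence with mean `μ`. The strong law
gives `T_k / k → μ` for the `k`-th informed site `T_k`, and inverting, `N(n) / n → 1 / μ`.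
-/

open MeasureTheory ProbabilityTheory Filter Finset
open scoped ENNReal Topology

lemma MeasureTheory.lintegral_natCast_eq_tsum_measure_lt {α : Type*} [MeasurableSpace α]
    {μ : Measure α} {X : α → ℕ} (hX : Measurable X) :
    ∫⁻ x, (X x : ℝ≥0∞) ∂μ = ∑' n, μ {x | n < X x} := by
  have hsum (x : α) : (X x : ℝ≥0∞) = ∑' n : ℕ, {x | n < X x}.indicator 1 x := by
    rw [tsum_eq_sum (s := range (X x)) fun n hn => Set.indicator_of_notMem (by simpa using hn) _]
    simp [Set.indicator_apply, filter_true_of_mem fun n hn => mem_range.1 hn]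
  have hind (n : ℕ) : AEMeasurable ({x | n < X x}.indicator (1 : α → ℝ≥0∞)) μ :=
    (measurable_one.indicator (measurableSet_lt measurable_const hX)).aemeasurable
  simp_rw [hsum]
  rw [lintegral_tsum hind]
  exact tsum_congr fun n => lintegral_indicator_one (measurableSet_lt measurable_const hX)

namespace ReverseFirework

section CountLE

variable {f : ℕ → ℕ}

def countLE (f : ℕ → ℕ) (n : ℕ) : ℕ := Nat.findGreatest (fun k => f k ≤ n) n

lemma apply_countLE_le (hf0 : f 0 = 0) (n : ℕ) : f (countLE f n) ≤ n :=
  Nat.findGreatest_spec (P := fun k => f k ≤ n) (Nat.zero_le n) (by simp [hf0])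

lemma le_countLE (hf : StrictMono f) {k n : ℕ} (h : f k ≤ n) : k ≤ countLE f n :=
  Nat.le_findGreatest (hf.le_apply.trans h) h

lemma lt_apply_countLE_succ (hf : StrictMono f) (n : ℕ) : n < f (countLE f n + 1) := by
  by_contra! h
  have := le_countLE hf h
  omega

lemma card_filter_eq_countLE (hf : StrictMono f) (hf0 : f 0 = 0) {p : ℕ → Prop}
    [DecidablePred p] (hp : ∀ i, p i ↔ i ∈ Set.range f) (n : ℕ) :
    #{i ∈ Icc 1 n | p i} = countLE f n := by
  have himage : {i ∈ Icc 1 n | p i} = (Icc 1 (countLE f n)).image f := by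
    ext i
    simp only [mem_filter, mem_Icc, mem_image, hp, Set.mem_range]
    constructor
    · rintro ⟨⟨hi1, hin⟩, k, rfl⟩
      have hk : k ≠ 0 := by rintro rfl; omega
      exact ⟨k, ⟨by omega, le_countLE hf hin⟩, rfl⟩
    · rintro ⟨k, ⟨hk1, hkK⟩, rfl⟩
      have : k ≤ f k := hf.le_apply
      exact ⟨⟨by omega, (hf.monotone hkK).trans (apply_countLE_le hf0 n)⟩, k, rfl⟩
  rw [himage, card_image_of_injective _ hf.injective, Nat.card_Icc, Nat.add_sub_cancel]

lemma tendsto_countLE_atTop (hf : StrictMono f) : Tendsto (countLE f) atTop atTop :=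
  tendsto_atTop_atTop.2 fun k => ⟨f k, fun _ hn => le_countLE hf hn⟩

lemma tendsto_countLE_div (hf : StrictMono f) (hf0 : f 0 = 0) {L : ℝ}
    (hL : Tendsto (fun k : ℕ => (f k : ℝ) / k) atTop (𝓝 L)) :
    Tendsto (fun n : ℕ => (countLE f n : ℝ) / n) atTop (𝓝 L⁻¹) := by
  have hL1 : 1 ≤ L := by
    refine ge_of_tendsto hL (eventually_ge_atTop 1 |>.mono fun k hk => ?_)
    rw [le_div_iff₀ (by positivity), one_mul]
    exact_mod_cast hf.le_apply
  have hinv : Tendsto (fun k : ℕ => (k : ℝ) / f k) atTop (𝓝 L⁻¹) := by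
    simpa only [inv_div] using hL.inv₀ (by linarith)
  have hinv' : Tendsto (fun k : ℕ => (k : ℝ) / (k + 1) * ((k + 1 : ℕ) / f (k + 1))) atTop
      (𝓝 (1 * L⁻¹)) :=
    (tendsto_natCast_div_add_atTop 1).mul (hinv.comp (tendsto_add_atTop_nat 1))
  rw [one_mul] at hinv'
  have hK := tendsto_countLE_atTop hf
  refine tendsto_of_tendsto_of_tendsto_of_le_of_le' (hinv'.comp hK) (hinv.comp hK) ?_ ?_ <;>
    filter_upwards [hK.eventually_ge_atTop 1] with n hn <;>
    have hle := apply_countLE_le hf0 n <;>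
    have hKf : countLE f n ≤ f (countLE f n) := hf.le_apply
  · have hlt := lt_apply_countLE_succ hf n
    rw [Function.comp_apply, Nat.cast_add_one, div_mul_div_cancel₀ (by positivity)]
    gcongr
    exact_mod_cast (show 0 < n by omega)
  · have hpos : (0 : ℝ) < f (countLE f n) := by
      exact_mod_cast (show 0 < f (countLE f n) by omega)
    exact div_le_div_of_nonneg_left (by positivity) hpos (by exact_mod_cast hle)

end CountLE

variable {Ω : Type*}

/-- `p + gap R p ω` is the next site informed directly by `p`; `gap R p ω = 0` if there is none. -/
noncomputable def gap (R : ℕ → Ω → ℕ) (p : ℕ) (ω : Ω) : ℕ :=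
  sInf {j | 1 ≤ j ∧ j ≤ R (p + j) ω}

noncomputable def renewalTime (R : ℕ → Ω → ℕ) : ℕ → Ω → ℕ
  | 0 => fun _ => 0
  | k + 1 => fun ω => renewalTime R k ω + gap R (renewalTime R k ω) ω

noncomputable def interarrival (R : ℕ → Ω → ℕ) (k : ℕ) (ω : Ω) : ℕ :=
  gap R (renewalTime R k ω) ω

def unheardWithin (R : ℕ → Ω → ℕ) (p n : ℕ) : Set Ω :=
  ⋂ m ∈ Ico (p + 1) (p + 1 + n), R m ⁻¹' Set.Iio (m - p)

section Gap

variable {R : ℕ → Ω → ℕ} {p : ℕ} {ω : Ω}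

lemma gap_ne_zero_and_le {j : ℕ} (hj : 1 ≤ j) (h : j ≤ R (p + j) ω) :
    gap R p ω ≠ 0 ∧ gap R p ω ≤ j :=
  ⟨Nat.one_le_iff_ne_zero.1 (Nat.sInf_mem (s := {j | 1 ≤ j ∧ j ≤ R (p + j) ω}) ⟨j, hj, h⟩).1,
    Nat.sInf_le ⟨hj, h⟩⟩

lemma gap_le_apply (h : gap R p ω ≠ 0) : gap R p ω ≤ R (p + gap R p ω) ω :=
  (Nat.sInf_mem (Nat.nonempty_of_pos_sInf (Nat.pos_of_ne_zero h))).2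

lemma mem_unheardWithin_iff {n : ℕ} :
    ω ∈ unheardWithin R p n ↔ gap R p ω = 0 ∨ n < gap R p ω := by
  simp only [unheardWithin, Set.mem_iInter, mem_Ico, Set.mem_preimage, Set.mem_Iio]
  constructor
  · intro h
    by_contra! hgap
    have hR := h (p + gap R p ω) ⟨by omega, by omega⟩
    rw [Nat.add_sub_cancel_left] at hR
    have := gap_le_apply hgap.1
    omega
  · rintro hgap m ⟨hm1, hm2⟩
    by_contra! hR
    have := gap_ne_zero_and_le (R := R) (ω := ω) (j := m - p) (by omega)
      (by rwa [Nat.add_sub_cancel' (by omega)])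
    omega

lemma unheardWithin_eq_union (n : ℕ) :
    unheardWithin R p n = {ω | gap R p ω = 0} ∪ {ω | n < gap R p ω} :=
  Set.ext fun _ => mem_unheardWithin_iff

lemma setOf_gap_eq_zero : {ω | gap R p ω = 0} = ⋂ n, unheardWithin R p n := by
  ext ω
  simp only [Set.mem_ofPred_eq, Set.mem_iInter, mem_unheardWithin_iff]
  exact ⟨fun h _ => Or.inl h, fun h => (h (gap R p ω)).resolve_right (lt_irrefl _)⟩

lemma unheardWithin_succ_subset (n : ℕ) : unheardWithin R p (n + 1) ⊆ unheardWithin R p n :=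
  fun _ h => by rw [mem_unheardWithin_iff] at h ⊢; omega

lemma setOf_gap_eq_succ (a : ℕ) :
    {ω | gap R p ω = a + 1} = unheardWithin R p a \ unheardWithin R p (a + 1) := by
  ext ω
  simp only [Set.mem_ofPred_eq, Set.mem_sdiff, mem_unheardWithin_iff]
  omega

lemma measurableSet_unheardWithin_of_subset {S : Set ℕ} {p n : ℕ}
    (hS : ↑(Ico (p + 1) (p + 1 + n)) ⊆ S) :
    MeasurableSet[⨆ m ∈ S, MeasurableSpace.comap (R m) inferInstance] (unheardWithin R p n) :=
  measurableSet_biInter _ fun m hm =>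
    le_iSup₂ (f := fun m (_ : m ∈ S) => MeasurableSpace.comap (R m) inferInstance) m (hS hm) _
      ⟨_, measurableSet_Iio, rfl⟩

lemma measurableSet_gap_eq_succ_of_subset {S : Set ℕ} {a : ℕ}
    (hS : ↑(Ico (p + 1) (p + 1 + (a + 1))) ⊆ S) :
    MeasurableSet[⨆ m ∈ S, MeasurableSpace.comap (R m) inferInstance]
      {ω | gap R p ω = a + 1} := by
  rw [setOf_gap_eq_succ]
  refine .diff (measurableSet_unheardWithin_of_subset (subset_trans ?_ hS))
    (measurableSet_unheardWithin_of_subset hS)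
  exact_mod_cast Ico_subset_Ico_right (by omega)

end Gap

section RenewalTime

variable {R : ℕ → Ω → ℕ} {ω : Ω}

lemma renewalTime_succ (k : ℕ) :
    renewalTime R (k + 1) ω = renewalTime R k ω + interarrival R k ω := rfl

lemma renewalTime_eq_sum (k : ℕ) : renewalTime R k ω = ∑ i ∈ range k, interarrival R i ω := by
  induction k with
  | zero => rfl
  | succ k ih => rw [renewalTime_succ, ih, sum_range_succ]

lemma strictMono_renewalTime (hgap : ∀ k, interarrival R k ω ≠ 0) :
    StrictMono (renewalTime R · ω) :=
  strictMono_nat_of_lt_succ fun k => by have := hgap k; rw [renewalTime_succ]; omega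

lemma renewalTime_eq_of_interarrival_eq {a : ℕ → ℕ} {k : ℕ}
    (h : ∀ i < k, interarrival R i ω = a i + 1) :
    renewalTime R k ω = ∑ i ∈ range k, (a i + 1) := by
  rw [renewalTime_eq_sum]
  exact sum_congr rfl fun i hi => h i (mem_range.1 hi)

lemma informed_iff_mem_range_renewalTime (hgap : ∀ k, interarrival R k ω ≠ 0) {z : ℕ → Prop}
    (hz0 : z 0) (hz : ∀ n, 0 < n → (z n ↔ ∃ m < n, z m ∧ n - m ≤ R n ω)) (n : ℕ) :
    z n ↔ n ∈ Set.range (renewalTime R · ω) := by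
  set T := (renewalTime R · ω)
  have hT : StrictMono T := strictMono_renewalTime hgap
  refine Nat.strong_induction_on n fun n ih => ?_
  rcases Nat.eq_zero_or_pos n with rfl | hn
  · exact iff_of_true hz0 ⟨0, rfl⟩
  obtain ⟨K, hK, hK1⟩ : ∃ K, T K < n ∧ n ≤ T (K + 1) :=
    ⟨countLE T (n - 1), by have := apply_countLE_le (f := T) rfl (n - 1); omega,
      by have := lt_apply_countLE_succ hT (n - 1); omega⟩
  have hTK : T (K + 1) = T K + gap R (T K) ω := rfl
  have hlast : (∃ m < n, z m ∧ n - m ≤ R n ω) ↔ n - T K ≤ R n ω := by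
    refine ⟨?_, fun h => ⟨T K, hK, (ih _ hK).2 ⟨K, rfl⟩, h⟩⟩
    rintro ⟨m, hm, hzm, hR⟩
    obtain ⟨k, rfl⟩ := (ih m hm).1 hzm
    have : T k ≤ T K := hT.monotone (hT.lt_iff_lt.1 (hK1.trans_lt' hm) |> Nat.lt_succ_iff.1)
    omega
  rw [hz n hn, hlast]
  constructor
  · intro h
    have := gap_ne_zero_and_le (R := R) (ω := ω) (p := T K) (j := n - T K) (by omega)
      (by rwa [Nat.add_sub_cancel' hK.le])
    exact ⟨K + 1, by omega⟩
  · rintro ⟨k, rfl⟩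
    obtain rfl : k = K + 1 := le_antisymm (hT.le_iff_le.1 hK1) (hT.lt_iff_lt.1 hK)
    rw [hTK, Nat.add_sub_cancel_left]
    exact gap_le_apply (hgap K)

end RenewalTime

section Measurability

variable [MeasurableSpace Ω] {R : ℕ → Ω → ℕ} (hmeas : ∀ m, Measurable (R m))
include hmeas

lemma measurableSet_unheardWithin (p n : ℕ) : MeasurableSet (unheardWithin R p n) :=
  measurableSet_biInter _ fun m _ => hmeas m measurableSet_Iio

lemma measurable_gap (p : ℕ) : Measurable (gap R p) := by
  refine measurable_to_countable' fun a => ?_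
  change MeasurableSet {ω | gap R p ω = a}
  cases a with
  | zero =>
    rw [setOf_gap_eq_zero]
    exact .iInter fun n => measurableSet_unheardWithin hmeas p n
  | succ a =>
    rw [setOf_gap_eq_succ]
    exact (measurableSet_unheardWithin hmeas p a).diff (measurableSet_unheardWithin hmeas p _)

lemma measurable_gap_comp {τ : Ω → ℕ} (hτ : Measurable τ) : Measurable fun ω => gap R (τ ω) ω :=
  (measurable_from_prod_countable_left (f := fun q : Ω × ℕ => gap R q.2 q.1)
    fun p => measurable_gap hmeas p).comp (measurable_id.prodMk hτ)

lemma measurable_renewalTime (k : ℕ) : Measurable (renewalTime R k) := by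
  induction k with
  | zero => exact measurable_const
  | succ k ih => exact ih.add (measurable_gap_comp hmeas ih)

lemma measurable_interarrival (k : ℕ) : Measurable (interarrival R k) :=
  measurable_gap_comp hmeas (measurable_renewalTime hmeas k)

end Measurability

section Probability

variable [MeasurableSpace Ω] (P : Measure Ω) (R : ℕ → Ω → ℕ)

/-- The probability that a gap exceeds `n`. -/
noncomputable def gapTail (n : ℕ) : ℝ≥0∞ := ∏ i ∈ range n, P (R 0 ⁻¹' Set.Iic i)

variable {P R} (hmeas : ∀ m, Measurable (R m)) (hindep : iIndepFun R P)
include hmeas hindep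

lemma indep_iSup_Iic_iSup_Ioi (n : ℕ) :
    Indep (⨆ m ∈ Set.Iic n, MeasurableSpace.comap (R m) inferInstance)
      (⨆ m ∈ Set.Ioi n, MeasurableSpace.comap (R m) inferInstance) P :=
  indep_iSup_of_disjoint (fun m => (hmeas m).comap_le) ((iIndepFun_iff_iIndep _ _ _).1 hindep)
    (Set.Iic_disjoint_Ioi le_rfl)

variable (hident : ∀ m, P.map (R m) = P.map (R 0))
include hident

lemma measure_unheardWithin (p n : ℕ) : P (unheardWithin R p n) = gapTail P R n := by
  rw [unheardWithin, hindep.measure_inter_preimage_eq_mul _ fun _ _ => measurableSet_Iio,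
    prod_Ico_eq_prod_range, Nat.add_sub_cancel_left, gapTail]
  refine prod_congr rfl fun i _ => ?_
  have hIio : Set.Iio (p + 1 + i - p) = Set.Iic i := by ext; simp; omega
  rw [hIio, ← Measure.map_apply (hmeas _) measurableSet_Iic, hident,
    Measure.map_apply (hmeas 0) measurableSet_Iic]

lemma measure_setOf_gap_eq_zero (hfin : ∑' n, gapTail P R n ≠ ∞) (p : ℕ) :
    P {ω | gap R p ω = 0} = 0 := by
  refine le_antisymm (ge_of_tendsto' (ENNReal.tendsto_atTop_zero_of_tsum_ne_top hfin)
    fun n => ?_) zero_le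
  rw [← measure_unheardWithin hmeas hindep hident p n, unheardWithin_eq_union]
  exact measure_mono Set.subset_union_left

lemma measure_setOf_interarrival_eq_zero (hfin : ∑' n, gapTail P R n ≠ ∞) (k : ℕ) :
    P {ω | interarrival R k ω = 0} = 0 :=
  measure_mono_null (fun ω hω => Set.mem_iUnion.2 ⟨renewalTime R k ω, hω⟩)
    (measure_iUnion_null fun p => measure_setOf_gap_eq_zero hmeas hindep hident hfin p)

lemma ae_interarrival_ne_zero (hfin : ∑' n, gapTail P R n ≠ ∞) :
    ∀ᵐ ω ∂P, ∀ k, interarrival R k ω ≠ 0 :=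
  ae_all_iff.2 fun k => ae_iff.2 (by
    simpa using measure_setOf_interarrival_eq_zero hmeas hindep hident hfin k)

lemma lintegral_interarrival_zero (hfin : ∑' n, gapTail P R n ≠ ∞) :
    ∫⁻ ω, (interarrival R 0 ω : ℝ≥0∞) ∂P = ∑' n, gapTail P R n := by
  rw [lintegral_natCast_eq_tsum_measure_lt (measurable_interarrival hmeas 0)]
  refine tsum_congr fun n => ?_
  rw [← measure_unheardWithin hmeas hindep hident 0 n, unheardWithin_eq_union,
    measure_congr (union_ae_eq_right_of_ae_eq_empty (ae_eq_empty.2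
      (measure_setOf_gap_eq_zero hmeas hindep hident hfin 0)))]
  rfl

variable [IsProbabilityMeasure P]

lemma measure_setOf_gap_eq_succ (p a : ℕ) :
    P {ω | gap R p ω = a + 1} = gapTail P R a - gapTail P R (a + 1) := by
  rw [setOf_gap_eq_succ, measure_sdiff (unheardWithin_succ_subset a)
    (measurableSet_unheardWithin hmeas p _).nullMeasurableSet (measure_ne_top _ _),
    measure_unheardWithin hmeas hindep hident, measure_unheardWithin hmeas hindep hident]

/-- The event is decided by disjoint blocks of coordinates of `R`, so it factorises. -/
lemma measure_biInter_interarrival_eq_succ (a : ℕ → ℕ) (k : ℕ) :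
    P (⋂ i ∈ range k, {ω | interarrival R i ω = a i + 1}) =
      ∏ i ∈ range k, (gapTail P R (a i) - gapTail P R (a i + 1)) := by
  set A : ℕ → Set Ω := fun k => ⋂ i ∈ range k, {ω | interarrival R i ω = a i + 1}
  set t : ℕ → ℕ := fun k => ∑ i ∈ range k, (a i + 1)
  have hA_succ (k : ℕ) : A (k + 1) = A k ∩ {ω | gap R (t k) ω = a k + 1} := by
    ext ω
    simp only [A, Set.mem_iInter, Set.mem_inter_iff, mem_range, Set.mem_ofPred_eq]
    constructor
    · intro h
      refine ⟨fun i hi => h i (by omega), ?_⟩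
      have := h k (by omega)
      rwa [interarrival, renewalTime_eq_of_interarrival_eq fun i hi => h i (by omega)] at this
    · rintro ⟨h, hk⟩ i hi
      rcases Nat.lt_succ_iff_lt_or_eq.1 hi with hi | rfl
      · exact h i hi
      · rwa [interarrival, renewalTime_eq_of_interarrival_eq h]
  suffices ∀ k, MeasurableSet[⨆ m ∈ Set.Iic (t k), MeasurableSpace.comap (R m) inferInstance]
      (A k) ∧ P (A k) = ∏ i ∈ range k, (gapTail P R (a i) - gapTail P R (a i + 1)) from
    (this k).2
  intro k
  induction k with
  | zero => simp [A]
  | succ k ih =>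
    have ht : t (k + 1) = t k + (a k + 1) := sum_range_succ _ _
    have hpast := measurableSet_gap_eq_succ_of_subset (R := R) (p := t k) (a := a k)
      (S := Set.Iic (t (k + 1))) fun m hm => by
        simp only [coe_Ico, Set.mem_Ico] at hm; simp; omega
    have hfuture := measurableSet_gap_eq_succ_of_subset (R := R) (p := t k) (a := a k)
      (S := Set.Ioi (t k)) fun m hm => by
        simp only [coe_Ico, Set.mem_Ico] at hm; simp; omega
    rw [hA_succ]
    refine ⟨MeasurableSet.inter ?_ hpast, ?_⟩
    · have hle : ⨆ m ∈ Set.Iic (t k), MeasurableSpace.comap (R m) inferInstance ≤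
          ⨆ m ∈ Set.Iic (t (k + 1)), MeasurableSpace.comap (R m) inferInstance :=
        biSup_mono fun m hm => Set.mem_Iic.2 (le_trans hm (by omega))
      exact hle _ ih.1
    · rw [(Indep_iff _ _ _).1 (indep_iSup_Iic_iSup_Ioi hmeas hindep (t k)) _ _ ih.1 hfuture,
        ih.2, measure_setOf_gap_eq_succ hmeas hindep hident, prod_range_succ]

lemma map_interarrival_fin_eq_pi (hfin : ∑' n, gapTail P R n ≠ ∞) (k : ℕ) :
    P.map (fun ω (i : Fin k) => interarrival R i ω) =
      Measure.pi fun _ => P.map (interarrival R 0) := by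
  have hG := measurable_interarrival hmeas
  have : IsProbabilityMeasure (P.map (interarrival R 0)) :=
    Measure.isProbabilityMeasure_map (hG 0).aemeasurable
  have hvec : Measurable fun ω (i : Fin k) => interarrival R i ω :=
    measurable_pi_lambda _ fun i => hG i
  refine Measure.ext_of_singleton fun x => ?_
  rw [Measure.map_apply hvec (measurableSet_singleton x), Measure.pi_singleton]
  simp_rw [Measure.map_apply (hG 0) (measurableSet_singleton _)]
  have hpre : (fun ω (i : Fin k) => interarrival R i ω) ⁻¹' {x} =
      ⋂ i : Fin k, {ω | interarrival R i ω = x i} := by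
    ext
    simp [funext_iff]
  rw [hpre]
  by_cases hx : ∃ i, x i = 0
  · obtain ⟨i, hi⟩ := hx
    have hnull := measure_setOf_interarrival_eq_zero hmeas hindep hident hfin
    rw [prod_eq_zero (mem_univ i) (by rw [hi]; exact hnull 0),
      measure_mono_null (Set.iInter_subset _ i) (by rw [hi]; exact hnull i)]
  push Not at hx
  set a : ℕ → ℕ := fun i => if h : i < k then x ⟨i, h⟩ - 1 else 0
  have hxa (i : Fin k) : x i = a i + 1 := by
    have := hx i
    simp only [a, i.2, dite_true, Fin.eta]
    omega
  have hinter : ⋂ i : Fin k, {ω | interarrival R i ω = x i} =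
      ⋂ i ∈ range k, {ω | interarrival R i ω = a i + 1} := by
    ext
    simp [hxa, Fin.forall_iff]
  rw [hinter, measure_biInter_interarrival_eq_succ hmeas hindep hident,
    ← Fin.prod_univ_eq_prod_range]
  simp_rw [hxa]
  refine prod_congr rfl fun i _ => ?_
  exact (measure_setOf_gap_eq_succ hmeas hindep hident 0 (a i)).symm

lemma map_interarrival (hfin : ∑' n, gapTail P R n ≠ ∞) (i : ℕ) :
    P.map (interarrival R i) = P.map (interarrival R 0) := by
  have hG := measurable_interarrival hmeas
  have : IsProbabilityMeasure (P.map (interarrival R 0)) :=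
    Measure.isProbabilityMeasure_map (hG 0).aemeasurable
  have hvec : Measurable fun ω (j : Fin (i + 1)) => interarrival R j ω :=
    measurable_pi_lambda _ fun j => hG j
  calc P.map (interarrival R i)
      = (P.map fun ω (j : Fin (i + 1)) => interarrival R j ω).map (Function.eval (Fin.last i)) := by
        rw [Measure.map_map (measurable_pi_apply _) hvec]
        rfl
    _ = P.map (interarrival R 0) := by
        rw [map_interarrival_fin_eq_pi hmeas hindep hident hfin,
          (measurePreserving_eval _ _).map_eq]

lemma indepFun_interarrival (hfin : ∑' n, gapTail P R n ≠ ∞) {i j : ℕ} (hij : i ≠ j) :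
    IndepFun (interarrival R i) (interarrival R j) P := by
  have hG := measurable_interarrival hmeas
  have hindepFin : iIndepFun (fun l : Fin (max i j + 1) => interarrival R l) P := by
    rw [iIndepFun_iff_map_fun_eq_pi_map fun l : Fin (max i j + 1) => (hG l).aemeasurable,
      map_interarrival_fin_eq_pi hmeas hindep hident hfin]
    simp_rw [map_interarrival hmeas hindep hident hfin]
  exact hindepFin.indepFun (i := ⟨i, by omega⟩) (j := ⟨j, by omega⟩) (by simpa [Fin.ext_iff])

theorem ae_tendsto_renewalTime_div (hfin : ∑' n, gapTail P R n ≠ ∞) :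
    ∀ᵐ ω ∂P, Tendsto (fun k : ℕ => (renewalTime R k ω : ℝ) / k) atTop
      (𝓝 (∑' n, gapTail P R n).toReal) := by
  have hG := measurable_interarrival hmeas
  have hG0 : AEMeasurable (fun ω => (interarrival R 0 ω : ℝ≥0∞)) P :=
    (measurable_from_nat.comp (hG 0)).aemeasurable
  have hlint := lintegral_interarrival_zero hmeas hindep hident hfin
  have hslln := strong_law_ae_real (fun i ω => (interarrival R i ω : ℝ))
    (by simpa using integrable_toReal_of_lintegral_ne_top hG0 (hlint ▸ hfin))
    (fun i j hij => (indepFun_interarrival hmeas hindep hident hfin hij).comp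
      measurable_from_nat measurable_from_nat)
    (fun i => IdentDistrib.comp ⟨(hG i).aemeasurable, (hG 0).aemeasurable,
      map_interarrival hmeas hindep hident hfin i⟩ measurable_from_nat)
  have hmean : P[fun ω => (interarrival R 0 ω : ℝ)] = (∑' n, gapTail P R n).toReal := by
    simpa [hlint] using integral_toReal hG0 (ae_of_all _ fun _ => ENNReal.natCast_lt_top _)
  filter_upwards [hslln] with ω hω
  simpa [renewalTime_eq_sum, hmean] using hω

end Probability

end ReverseFirework

open ReverseFirework in
theorem rumor_stmt_13_general {Ω : Type*} [MeasurableSpace Ω] (P : Measure Ω) [IsProbabilityMeasure P]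
    (R : ℕ → Ω → ℕ) (hmeas : ∀ i, Measurable (R i))
    (hindep : iIndepFun R P)
    (hident : ∀ i, Measure.map (R i) P = Measure.map (R 0) P)
    (α : ℕ → ℝ) (hα : ∀ k, P {ω | R 0 ω ≤ k} = ENNReal.ofReal (α k))
    (h01 : ∀ k, 0 ≤ α k ∧ α k ≤ 1)
    (ζ : ℕ → Ω → Bool)
    (hζ0 : ∀ ω, ζ 0 ω = true)
    (hζ : ∀ n : ℕ, 0 < n → ∀ ω,
      (ζ n ω = true ↔ ∃ m < n, ζ m ω = true ∧ n - m ≤ R n ω))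
    (hsum : Summable fun j : ℕ => ∏ i ∈ Finset.range (j + 1), α i) :
    ∀ᵐ ω ∂P, Tendsto
      (fun n : ℕ => (∑ i ∈ Finset.Icc 1 n, (if ζ i ω = true then (1 : ℝ) else 0)) / n)
      atTop
      (nhds (1 / (1 + ∑' j : ℕ, ∏ i ∈ Finset.range (j + 1), α i))) := by
  have hα_nonneg (n : ℕ) : 0 ≤ ∏ i ∈ range n, α i := prod_nonneg fun i _ => (h01 i).1
  have hmean : ∑' n, gapTail P R n = ENNReal.ofReal (1 + ∑' j, ∏ i ∈ range (j + 1), α i) := by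
    have hsum' : Summable fun n => ∏ i ∈ range n, α i := (summable_nat_add_iff 1).1 hsum
    have hF (n : ℕ) : gapTail P R n = ENNReal.ofReal (∏ i ∈ range n, α i) := by
      rw [gapTail, ENNReal.ofReal_prod_of_nonneg fun i _ => (h01 i).1]
      exact prod_congr rfl fun i _ => hα i
    rw [tsum_congr hF, ← ENNReal.ofReal_tsum_of_nonneg hα_nonneg hsum', hsum'.tsum_eq_zero_add,
      prod_range_zero]
  have hfin : ∑' n, gapTail P R n ≠ ∞ := hmean ▸ ENNReal.ofReal_ne_top
  filter_upwards [ae_tendsto_renewalTime_div hmeas hindep hident hfin,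
    ae_interarrival_ne_zero hmeas hindep hident hfin] with ω hT hgap
  have hmono := strictMono_renewalTime hgap
  have hcount (n : ℕ) : ∑ i ∈ Icc 1 n, (if ζ i ω = true then (1 : ℝ) else 0) =
      countLE (renewalTime R · ω) n := by
    rw [sum_boole, card_filter_eq_countLE hmono rfl
      (informed_iff_mem_range_renewalTime hgap (hζ0 ω) fun n hn => hζ n hn ω)]
  rw [hmean, ENNReal.toReal_ofReal
    (add_nonneg zero_le_one (tsum_nonneg fun j => hα_nonneg _))] at hT
  simpa only [hcount, one_div] using tendsto_countLE_div hmono rfl hT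

/-- law of large numbers for the Reverse Firework process: if
`μ = 1 + ∑_{j≥1} ∏_{i=0}^{j-1} α_i < ∞`, then `N(n)/n → 1/μ` almost surely, where
`N(n)` is the number of spreaders among sites `1,...,n`. -/
theorem rumor_stmt_13 {Ω : Type*} [MeasurableSpace Ω] (P : Measure Ω) [IsProbabilityMeasure P]
    (R : ℕ → Ω → ℕ) (hmeas : ∀ i, Measurable (R i))
    (hindep : iIndepFun R P)
    (hident : ∀ i, Measure.map (R i) P = Measure.map (R 0) P)
    (α : ℕ → ℝ) (hα : ∀ k, P {ω | R 0 ω ≤ k} = ENNReal.ofReal (α k))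
    (hmono : Monotone α) (h01 : ∀ k, 0 ≤ α k ∧ α k ≤ 1) (hα0 : 0 < α 0 ∧ α 0 < 1)
    (ζ : ℕ → Ω → Bool)
    (hζ0 : ∀ ω, ζ 0 ω = true)
    (hζ : ∀ n : ℕ, 0 < n → ∀ ω,
      (ζ n ω = true ↔ ∃ m < n, ζ m ω = true ∧ n - m ≤ R n ω))
    (hsum : Summable fun j : ℕ => ∏ i ∈ Finset.range (j + 1), α i) :
    ∀ᵐ ω ∂P, Tendsto
      (fun n : ℕ => (∑ i ∈ Finset.Icc 1 n, (if ζ i ω = true then (1 : ℝ) else 0)) / n)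
      atTop
      (nhds (1 / (1 + ∑' j : ℕ, ∏ i ∈ Finset.range (j + 1), α i))) :=
  rumor_stmt_13_general P R hmeas hindep hident α hα h01 ζ hζ0 hζ hsum
end

section
/- For the Firework and Reverse Firework processes built from the same cumulative distribution (α_k), the probability that the information reaches the individual at site n is equal in both processes, namely both equal to u_n, the renewal sequence of the renewal process with inter-arrival distribution q_k = (1-α_{k-1})∏_{i=0}^{k-2}α_i. -/
open MeasureTheory ProbabilityTheory Filter Finset
open scoped ENNReal

/-!
The reverse firework informs site `n` iff every site `i ∈ [1, n]` is overtaken from the right: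
some `j ∈ [i, n]` has `j - R'_j < i`. Read backwards, this is the event `n - 1 < M` for the
firework with radii `R'_n, …, R'_1`, a vector with the same law as `(R_0, …, R_{n-1})`; hence the
two processes inform site `n` with the same probability.

For the reverse process, split according to the first site `k ≥ 1` that is informed, necessarily
by the origin: this has probability `q_k` (`R'_j < j` for `0 < j < k` and `R'_k ≥ k`), and from
there on the process restarts at `k`, driven by the independent radii `R'_{k+1}, R'_{k+2}, …`.
This is the renewal equation of `u`.
-/

section DependsOn

theorem exists_preimage_of_dependsOn {Ω ι β : Type*} {Φ : (ι → β) → Prop} {S : Finset ι}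
    (hΦ : DependsOn Φ (S : Set ι)) :
    ∃ E : Set (S → β), ∀ X : ι → Ω → β, {ω | Φ (X · ω)} = (fun ω (i : S) => X i ω) ⁻¹' E := by
  obtain ⟨g, hg⟩ := dependsOn_iff_exists_comp.1 hΦ
  exact ⟨{y | g y}, fun X => by rw [hg]; rfl⟩

variable {Ω ι β : Type*} [MeasurableSpace Ω] {P : Measure Ω}
  [MeasurableSpace β] [Countable β] [MeasurableSingletonClass β]

theorem measure_inter_eq_mul_of_dependsOn {X : ι → Ω → β} (hX : iIndepFun X P)
    (hm : ∀ i, Measurable (X i)) {S T : Finset ι} (hST : Disjoint S T)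
    {Φ Ψ : (ι → β) → Prop} (hΦ : DependsOn Φ (S : Set ι)) (hΨ : DependsOn Ψ (T : Set ι)) :
    P ({ω | Φ (X · ω)} ∩ {ω | Ψ (X · ω)}) = P {ω | Φ (X · ω)} * P {ω | Ψ (X · ω)} := by
  obtain ⟨E, hE⟩ := exists_preimage_of_dependsOn (Ω := Ω) hΦ
  obtain ⟨F, hF⟩ := exists_preimage_of_dependsOn (Ω := Ω) hΨ
  rw [hE, hF]
  exact (hX.indepFun_finset S T hST hm).measure_inter_preimage_eq_mul E F
    .of_discrete .of_discrete

theorem measure_eq_of_dependsOn {X Y : ι → Ω → β} {S : Finset ι}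
    (hXm : ∀ i, Measurable (X i)) (hYm : ∀ i, Measurable (Y i))
    (hX : iIndepFun (fun i : S => X i) P) (hY : iIndepFun (fun i : S => Y i) P)
    (hXY : ∀ i ∈ S, P.map (X i) = P.map (Y i))
    {Φ : (ι → β) → Prop} (hΦ : DependsOn Φ (S : Set ι)) :
    P {ω | Φ (X · ω)} = P {ω | Φ (Y · ω)} := by
  obtain ⟨E, hE⟩ := exists_preimage_of_dependsOn (Ω := Ω) hΦ
  have hlaw : ∀ Z : ι → Ω → β, (∀ i, Measurable (Z i)) → iIndepFun (fun i : S => Z i) P →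
      P {ω | Φ (Z · ω)} = Measure.pi (fun i : S => P.map (Z i)) E := fun Z hZm hZ => by
    rw [hE, ← hZ.map_fun_eq_pi_map (f := fun i : S => Z i) fun i => (hZm i).aemeasurable,
      Measure.map_apply (measurable_pi_lambda (fun ω (i : S) => Z i ω) fun i => hZm i)
        .of_discrete]
  rw [hlaw X hXm hX, hlaw Y hYm hY]
  congr 2 with i : 1
  exact hXY i i.2

theorem measurableSet_setOf_of_dependsOn {X : ι → Ω → β} (hm : ∀ i, Measurable (X i))
    {S : Finset ι} {Φ : (ι → β) → Prop} (hΦ : DependsOn Φ (S : Set ι)) :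
    MeasurableSet {ω | Φ (X · ω)} := by
  obtain ⟨E, hE⟩ := exists_preimage_of_dependsOn (Ω := Ω) hΦ
  rw [hE]
  exact measurable_pi_lambda (fun ω (i : S) => X i ω) (fun i => hm i) .of_discrete

end DependsOn

-- The firework with radii `r` informs site `n + 1`.
def FireworkReaches (r : ℕ → ℕ) (n : ℕ) : Prop :=
  ∀ i ≤ n, ∃ j ≤ i, i < j + r j

theorem dependsOn_fireworkReaches (n : ℕ) :
    DependsOn (fun r : ℕ → ℕ => FireworkReaches r n) (range (n + 1) : Set ℕ) := by
  intro r r' h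
  refine propext (forall₂_congr fun i hi => exists_congr fun j => and_congr_right fun hj => ?_)
  rw [h j (by simp only [coe_range, Set.mem_Iio]; omega)]

theorem lt_fireworkM_iff {Ω : Type*} (R : ℕ → Ω → ℕ) (ω : Ω) (n : ℕ) :
    (n : ℕ∞) < fireworkM R ω ↔ FireworkReaches (R · ω) n := by
  change _ ↔ ∀ i ≤ n, ∃ j ≤ i, i < j + R j ω
  rw [← ENat.add_one_le_iff (ENat.natCast_ne_top n), fireworkM, le_sInf_iff]
  constructor
  · intro h i hi
    by_contra! hcut
    have := h i ⟨i, rfl, fun j hj => by have := hcut j hj; omega⟩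
    norm_cast at this
    omega
  · rintro h _ ⟨i, rfl, hi⟩
    norm_cast
    by_contra! hin
    obtain ⟨j, hj, hjr⟩ := h i (by omega)
    have := hi j (by omega)
    omega

namespace ReverseFirework

inductive Informed (r : ℕ → ℕ) : ℕ → Prop
  | zero : Informed r 0
  | step {m n : ℕ} : m < n → Informed r m → n - m ≤ r n → Informed r n

section Combinatorics

variable {r r' : ℕ → ℕ} {k m n : ℕ}

theorem informed_iff_of_pos (hn : 0 < n) :
    Informed r n ↔ ∃ m < n, Informed r m ∧ n - m ≤ r n := by
  constructor
  · rintro (_ | ⟨hmn, hm, hr⟩)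
    · exact absurd hn (lt_irrefl 0)
    · exact ⟨_, hmn, hm, hr⟩
  · rintro ⟨m, hmn, hm, hr⟩
    exact .step hmn hm hr

theorem eq_true_iff_informed {ζ : ℕ → Bool} (h0 : ζ 0 = true)
    (hstep : ∀ n, 0 < n → (ζ n = true ↔ ∃ m < n, ζ m = true ∧ n - m ≤ r n)) :
    ∀ n, ζ n = true ↔ Informed r n := by
  intro n
  induction n using Nat.strong_induction_on with
  | _ n ih =>
    rcases Nat.eq_zero_or_pos n with rfl | hn
    · exact iff_of_true h0 .zero
    · rw [hstep n hn, informed_iff_of_pos hn]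
      exact exists_congr fun m => and_congr_right fun hmn => and_congr_left' (ih m hmn)

theorem Informed.congr (h : Informed r n) (hrr' : ∀ i ∈ Icc 1 n, r i = r' i) :
    Informed r' n := by
  induction h with
  | zero => exact .zero
  | @step m n hmn _ hr ih =>
    refine .step hmn (ih fun i hi => hrr' i ?_) ?_
    · simp only [mem_Icc] at hi ⊢; omega
    · rw [← hrr' n (by simp only [mem_Icc]; omega)]; exact hr

-- `k` is the first site after the origin to be informed (necessarily by the origin).
def IsFirstInformed (r : ℕ → ℕ) (k : ℕ) : Prop :=
  (∀ j ∈ Ico 1 k, r j < j) ∧ k ≤ r k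

theorem IsFirstInformed.not_informed (hk : IsFirstInformed r k) {j : ℕ} (hj : Informed r j) :
    j ∉ Ico 1 k := by
  induction hj with
  | zero => simp
  | @step m j hmj _ hr ih =>
    intro hjk
    have hrj := hk.1 j hjk
    simp only [mem_Ico] at hjk ih
    exact ih ⟨by omega, by omega⟩

theorem IsFirstInformed.eq (hk : IsFirstInformed r k) (hk' : IsFirstInformed r m)
    (h1k : 1 ≤ k) (h1m : 1 ≤ m) : k = m := by
  by_contra hne
  rcases Nat.lt_or_gt_of_ne hne with hlt | hlt
  · have := hk'.1 k (mem_Ico.2 ⟨h1k, hlt⟩); have := hk.2; omega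
  · have := hk.1 m (mem_Ico.2 ⟨h1m, hlt⟩); have := hk'.2; omega

theorem IsFirstInformed.informed_add_iff (hk : IsFirstInformed r k) (h1k : 1 ≤ k) (d : ℕ) :
    Informed r (k + d) ↔ Informed (fun i => r (k + i)) d := by
  constructor
  · generalize hn : k + d = n
    intro h
    induction h generalizing d with
    | zero => omega
    | @step m n hmn hm hr ih =>
      subst hn
      rcases Nat.eq_zero_or_pos d with rfl | hd
      · exact .zero
      rcases Nat.lt_or_ge m k with hmk | hmk
      · obtain rfl : m = 0 := by
          by_contra hm0
          exact hk.not_informed hm (mem_Ico.2 ⟨by omega, hmk⟩)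
        exact .step hd .zero (by omega)
      · exact .step (by omega : m - k < d) (ih (m - k) (by omega)) (by omega)
  · intro h
    induction h with
    | zero => exact .step (by omega) .zero (by simpa using hk.2)
    | @step m n hmn _ hr ih => exact .step (by omega) ih (by omega)

theorem exists_isFirstInformed (h : Informed r n) (hn : 1 ≤ n) :
    ∃ k ∈ Icc 1 n, IsFirstInformed r k := by
  have hdirect : ∃ j ∈ Icc 1 n, j ≤ r j := by
    induction h with
    | zero => omega
    | @step m n hmn hm hr ih =>
      rcases Nat.eq_zero_or_pos m with rfl | hm0
      · exact ⟨n, mem_Icc.2 ⟨hn, le_rfl⟩, by simpa using hr⟩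
      · obtain ⟨j, hj, hjr⟩ := ih hm0
        exact ⟨j, mem_Icc.2 ⟨(mem_Icc.1 hj).1, by have := (mem_Icc.1 hj).2; omega⟩, hjr⟩
  classical
  obtain ⟨j, hj, hjr⟩ := hdirect
  have hex : ∃ j, 1 ≤ j ∧ j ≤ r j := ⟨j, (mem_Icc.1 hj).1, hjr⟩
  refine ⟨Nat.find hex, mem_Icc.2 ⟨(Nat.find_spec hex).1, ?_⟩, ?_, (Nat.find_spec hex).2⟩
  · exact (Nat.find_min' hex ⟨(mem_Icc.1 hj).1, hjr⟩).trans (mem_Icc.1 hj).2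
  · intro i hi
    have := Nat.find_min hex (mem_Ico.1 hi).2
    simp only [mem_Ico, not_and, not_le] at this hi
    exact this hi.1

theorem informed_iff_exists_isFirstInformed (hn : 1 ≤ n) :
    Informed r n ↔ ∃ k ∈ Icc 1 n, IsFirstInformed r k ∧ Informed (fun i => r (k + i)) (n - k) := by
  constructor
  · intro h
    obtain ⟨k, hkn, hk⟩ := exists_isFirstInformed h hn
    have hkn' := mem_Icc.1 hkn
    refine ⟨k, hkn, hk, (hk.informed_add_iff hkn'.1 _).1 ?_⟩
    rwa [Nat.add_sub_cancel' hkn'.2]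
  · rintro ⟨k, hkn, hk, h⟩
    have hkn' := mem_Icc.1 hkn
    rw [← Nat.add_sub_cancel' hkn'.2]
    exact (hk.informed_add_iff hkn'.1 _).2 h

theorem informed_iff_forall_covered :
    Informed r n ↔ ∀ i ∈ Icc 1 n, ∃ j ∈ Icc i n, j < i + r j := by
  constructor
  · intro h
    induction h with
    | zero => simp
    | @step m n hmn _ hr ih =>
      intro i hi
      simp only [mem_Icc] at hi
      rcases Nat.lt_or_ge m i with hmi | hmi
      · exact ⟨n, mem_Icc.2 ⟨hi.2, le_rfl⟩, by omega⟩
      · obtain ⟨j, hj, hjr⟩ := ih i (mem_Icc.2 ⟨hi.1, hmi⟩)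
        exact ⟨j, mem_Icc.2 ⟨(mem_Icc.1 hj).1, by have := (mem_Icc.1 hj).2; omega⟩, hjr⟩
  · intro hcov
    rcases Nat.eq_zero_or_pos n with rfl | hn
    · exact .zero
    classical
    -- `m + 1` is covered by some `j` informed from the last informed site `m < n`, so `j = n`.
    set m := Nat.findGreatest (Informed r) (n - 1)
    have hm : Informed r m := Nat.findGreatest_spec (Nat.zero_le _) .zero
    have hmn : m ≤ n - 1 := Nat.findGreatest_le _
    obtain ⟨j, hj, hjr⟩ := hcov (m + 1) (mem_Icc.2 ⟨by omega, by omega⟩)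
    simp only [mem_Icc] at hj
    have hjinf : Informed r j := .step (by omega) hm (by omega)
    obtain rfl : j = n := by
      by_contra hjn
      exact Nat.findGreatest_is_greatest (by omega : m < j) (by omega) hjinf
    exact hjinf

theorem informed_succ_iff_fireworkReaches_reverse :
    Informed r (n + 1) ↔ FireworkReaches (fun j => r (n + 1 - j)) n := by
  rw [informed_iff_forall_covered, FireworkReaches]
  constructor
  · intro h i hi
    obtain ⟨j, hj, hjr⟩ := h (n + 1 - i) (mem_Icc.2 ⟨by omega, by omega⟩)
    simp only [mem_Icc] at hj
    exact ⟨n + 1 - j, by omega, by rw [Nat.sub_sub_self (by omega)]; omega⟩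
  · intro h i hi
    simp only [mem_Icc] at hi
    obtain ⟨j, hj, hjr⟩ := h (n + 1 - i) (by omega)
    exact ⟨n + 1 - j, mem_Icc.2 ⟨by omega, by omega⟩, by omega⟩

theorem dependsOn_isFirstInformed (k : ℕ) :
    DependsOn (fun r : ℕ → ℕ => IsFirstInformed r k) (Icc 1 k : Set ℕ) := by
  intro r r' h
  have h' : ∀ j ∈ Ico 1 k, r j = r' j := fun j hj =>
    h j (by simp only [mem_Ico, coe_Icc, Set.mem_Icc] at hj ⊢; omega)
  simp only [IsFirstInformed]
  rcases Nat.eq_zero_or_pos k with rfl | hk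
  · simp
  rw [h k (by simp only [coe_Icc, Set.mem_Icc]; omega)]
  exact propext (and_congr_left' (forall₂_congr fun j hj => by rw [h' j hj]))

theorem dependsOn_informed_shift (k n : ℕ) :
    DependsOn (fun r : ℕ → ℕ => Informed (fun i => r (k + i)) (n - k)) (Ioc k n : Set ℕ) := by
  intro r r' h
  have hagree : ∀ i ∈ Icc 1 (n - k), r (k + i) = r' (k + i) := fun i hi =>
    h _ (by simp only [mem_Icc, coe_Ioc, Set.mem_Ioc] at hi ⊢; omega)
  exact propext ⟨fun hr => hr.congr hagree, fun hr' => hr'.congr fun i hi => (hagree i hi).symm⟩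

end Combinatorics

section Probability

variable {Ω : Type*} [MeasurableSpace Ω] {P : Measure Ω}
variable {X : ℕ → Ω → ℕ} {μ : Measure ℕ} {k n : ℕ}

theorem measure_isFirstInformed [IsProbabilityMeasure μ] (hm : ∀ i, Measurable (X i))
    (hX : iIndepFun X P) (hXμ : ∀ i, P.map (X i) = μ) {α : ℕ → ℝ≥0∞}
    (hα : ∀ c, μ (Set.Iic c) = α c) (hk : 1 ≤ k) :
    P {ω | IsFirstInformed (X · ω) k} = (1 - α (k - 1)) * ∏ i ∈ range (k - 1), α i := by
  classical
  set C : ℕ → Set ℕ := fun j => if j < k then Set.Iio j else Set.Ici k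
  have hset : {ω | IsFirstInformed (X · ω) k} = ⋂ j ∈ Icc 1 k, X j ⁻¹' C j := by
    ext ω
    simp only [IsFirstInformed, mem_Ico, Set.mem_iInter, mem_Icc,
      Set.mem_preimage, C]
    constructor
    · rintro ⟨hlt, hge⟩ j ⟨hj1, hjk⟩
      split_ifs with h
      · exact hlt j ⟨hj1, h⟩
      · obtain rfl : j = k := by omega
        exact hge
    · intro h
      refine ⟨fun j hj => by simpa [hj.2] using h j ⟨hj.1, hj.2.le⟩, by simpa using h k ⟨hk, le_rfl⟩⟩
  have hIio : ∀ j, 1 ≤ j → μ (Set.Iio j) = α (j - 1) := fun j hj => by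
    rw [← hα, ← Set.Iic_sub_one_eq_Iio_of_not_isMin (by simpa using Nat.one_le_iff_ne_zero.1 hj)]
  rw [hset, hX.measure_inter_preimage_eq_mul _ fun _ _ => .of_discrete]
  simp_rw [← Measure.map_apply (hm _) MeasurableSet.of_discrete, hXμ]
  rw [← Finset.Ico_add_one_right_eq_Icc, prod_Ico_succ_top hk, prod_Ico_eq_prod_range, mul_comm]
  congr 1
  · simp only [C, lt_irrefl, if_false]
    rw [← Set.compl_Iio, prob_compl_eq_one_sub .of_discrete, hIio k hk]
  · refine prod_congr rfl fun i hi => ?_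
    simp only [mem_range] at hi
    simp only [C, if_pos (by omega : 1 + i < k), hIio (1 + i) (by omega), Nat.add_sub_cancel_left]

theorem measure_informed_eq_sum (hm : ∀ i, Measurable (X i)) (hX : iIndepFun X P)
    (hn : 1 ≤ n) :
    P {ω | Informed (X · ω) n} = ∑ k ∈ Icc 1 n,
      P {ω | IsFirstInformed (X · ω) k} * P {ω | Informed (fun i => X (k + i) ω) (n - k)} := by
  have hunion : {ω | Informed (X · ω) n} = ⋃ k ∈ Icc 1 n,
      {ω | IsFirstInformed (X · ω) k} ∩ {ω | Informed (fun i => X (k + i) ω) (n - k)} := by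
    ext ω
    simp only [Set.mem_iUnion, Set.mem_inter_iff, exists_prop]
    exact informed_iff_exists_isFirstInformed hn
  have hdisj : Set.PairwiseDisjoint (Icc 1 n : Set ℕ) fun k =>
      {ω | IsFirstInformed (X · ω) k} ∩ {ω | Informed (fun i => X (k + i) ω) (n - k)} := by
    intro k hk k' hk' hne
    simp only [coe_Icc, Set.mem_Icc] at hk hk'
    exact Set.disjoint_left.2 fun ω h h' => hne (h.1.eq h'.1 hk.1 hk'.1)
  rw [hunion, measure_biUnion_finset hdisj fun k _ =>
    (measurableSet_setOf_of_dependsOn hm (dependsOn_isFirstInformed k)).inter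
      (measurableSet_setOf_of_dependsOn hm (dependsOn_informed_shift k n))]
  refine sum_congr rfl fun k _ => ?_
  exact measure_inter_eq_mul_of_dependsOn hX hm
    (disjoint_left.2 fun i hi hi' => by simp only [mem_Icc, mem_Ioc] at hi hi'; omega)
    (dependsOn_isFirstInformed k) (dependsOn_informed_shift k n)

theorem measure_informed_eq_renewal [IsProbabilityMeasure μ] {α u : ℕ → ℝ≥0∞}
    (hα : ∀ c, μ (Set.Iic c) = α c) (hu0 : u 0 = 1)
    (hurec : ∀ n : ℕ, u (n + 1) =
      ∑ k ∈ Icc 1 (n + 1), ((1 - α (k - 1)) * ∏ i ∈ range (k - 1), α i) * u (n + 1 - k))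
    (hm : ∀ i, Measurable (X i)) (hX : iIndepFun X P) (hXμ : ∀ i, P.map (X i) = μ) :
    P {ω | Informed (X · ω) n} = u n := by
  induction n using Nat.strong_induction_on generalizing X with
  | _ n ih =>
    rcases n with _ | n
    · have : IsProbabilityMeasure P := hX.isProbabilityMeasure
      simp [Informed.zero, hu0]
    rw [measure_informed_eq_sum hm hX n.succ_pos, hurec]
    refine sum_congr rfl fun k hk => ?_
    have hk1 := (mem_Icc.1 hk).1
    -- the process restarted at `k` is driven by the i.i.d. sequence `X (k + ·)`
    rw [measure_isFirstInformed hm hX hXμ hα hk1,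
      ih (n + 1 - k) (by omega) (fun i => hm _) (hX.precomp (add_right_injective k))
        fun i => hXμ _]

end Probability

end ReverseFirework

open ReverseFirework

theorem rumor_stmt_18_general {Ω : Type*} [MeasurableSpace Ω] (P : Measure Ω) [IsProbabilityMeasure P]
    (R R' : ℕ → Ω → ℕ) (hmeas : ∀ i, Measurable (R i)) (hmeas' : ∀ i, Measurable (R' i))
    (hindep : iIndepFun R P)
    (hindep' : iIndepFun R' P)
    (hident : ∀ i, Measure.map (R i) P = Measure.map (R 0) P)
    (hident' : ∀ i, Measure.map (R' i) P = Measure.map (R 0) P)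
    (α : ℕ → ℝ≥0∞) (hα : ∀ k, P {ω | R 0 ω ≤ k} = α k)
    (ζ : ℕ → Ω → Bool)
    (hζ0 : ∀ ω, ζ 0 ω = true)
    (hζ : ∀ n : ℕ, 0 < n → ∀ ω,
      (ζ n ω = true ↔ ∃ m < n, ζ m ω = true ∧ n - m ≤ R' n ω))
    (u : ℕ → ℝ≥0∞) (hu0 : u 0 = 1)
    (hurec : ∀ n : ℕ, u (n + 1) =
      ∑ k ∈ Finset.Icc 1 (n + 1),
        ((1 - α (k - 1)) * ∏ i ∈ Finset.range (k - 1), α i) * u (n + 1 - k)) :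
    ∀ n : ℕ, P {ω | (n : ℕ∞) < fireworkM R ω} = u (n + 1) ∧
      P {ω | ζ (n + 1) ω = true} = u (n + 1) := by
  set μ := P.map (R 0)
  have : IsProbabilityMeasure μ := Measure.isProbabilityMeasure_map (hmeas 0).aemeasurable
  have hμ : ∀ c, μ (Set.Iic c) = α c := fun c => by
    rw [Measure.map_apply (hmeas 0) .of_discrete]; exact hα c
  have hζR' : ∀ n ω, ζ n ω = true ↔ Informed (R' · ω) n := fun n ω =>
    eq_true_iff_informed (hζ0 ω) (fun m hm => hζ m hm ω) n
  have hreverse : ∀ n, P {ω | Informed (R' · ω) n} = u n := fun n =>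
    measure_informed_eq_renewal hμ hu0 hurec hmeas' hindep' hident'
  intro n
  have hreflect : Function.Injective fun i : range (n + 1) => n + 1 - (i : ℕ) := fun i j hij => by
    have := mem_range.1 i.2
    have := mem_range.1 j.2
    exact Subtype.ext (by simp only at hij; omega)
  refine ⟨?_, by simp_rw [hζR', hreverse]⟩
  calc P {ω | (n : ℕ∞) < fireworkM R ω}
      = P {ω | FireworkReaches (R · ω) n} := by simp_rw [lt_fireworkM_iff]
    _ = P {ω | FireworkReaches (fun j => R' (n + 1 - j) ω) n} :=
      measure_eq_of_dependsOn (Y := fun j => R' (n + 1 - j)) hmeas (fun _ => hmeas' _)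
        (hindep.precomp Subtype.val_injective) (hindep'.precomp hreflect)
        (fun i _ => (hident i).trans (hident' _).symm) (dependsOn_fireworkReaches n)
    _ = P {ω | Informed (R' · ω) (n + 1)} := by
      simp_rw [informed_succ_iff_fireworkReaches_reverse]
    _ = u (n + 1) := hreverse _

/-- for the Firework process (radii `R`) and the Reverse Firework process
(radii `R'`) built from the same cumulative distribution `(α_k)`, the probability that the
information reaches site `n` is the same in both processes, and equals the renewal sequence
`u` of the renewal process with inter-arrival distribution `q_k = (1-α_{k-1})∏_{i=0}^{k-2}α_i`:
`P(M > n) = P(ζ_{n+1} = 1) = u_{n+1}` for all `n ≥ 0`. -/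
theorem rumor_stmt_18 {Ω : Type*} [MeasurableSpace Ω] (P : Measure Ω) [IsProbabilityMeasure P]
    (R R' : ℕ → Ω → ℕ) (hmeas : ∀ i, Measurable (R i)) (hmeas' : ∀ i, Measurable (R' i))
    (hindep : iIndepFun R P)
    (hindep' : iIndepFun R' P)
    (hident : ∀ i, Measure.map (R i) P = Measure.map (R 0) P)
    (hident' : ∀ i, Measure.map (R' i) P = Measure.map (R 0) P)
    (α : ℕ → ℝ≥0∞) (hα : ∀ k, P {ω | R 0 ω ≤ k} = α k)
    (hle1 : ∀ k, α k ≤ 1) (hα0 : 0 < α 0 ∧ α 0 < 1)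
    (ζ : ℕ → Ω → Bool)
    (hζ0 : ∀ ω, ζ 0 ω = true)
    (hζ : ∀ n : ℕ, 0 < n → ∀ ω,
      (ζ n ω = true ↔ ∃ m < n, ζ m ω = true ∧ n - m ≤ R' n ω))
    (u : ℕ → ℝ≥0∞) (hu0 : u 0 = 1)
    (hurec : ∀ n : ℕ, u (n + 1) =
      ∑ k ∈ Finset.Icc 1 (n + 1),
        ((1 - α (k - 1)) * ∏ i ∈ Finset.range (k - 1), α i) * u (n + 1 - k)) :
    ∀ n : ℕ, P {ω | (n : ℕ∞) < fireworkM R ω} = u (n + 1) ∧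
      P {ω | ζ (n + 1) ω = true} = u (n + 1) :=
  rumor_stmt_18_general P R R' hmeas hmeas' hindep hindep' hident hident' α hα ζ hζ0 hζ u hu0 hurec
end
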